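/- arXiv:1402.2903 — 10 statements merged into one kernel-verified Lean document; each statement's English description precedes it below -/
import Mathlib

section
/- In a König-Egerváry graph G, every maximum matching M is contained in the edge set (S, V(G) - S) for every maximum independent set S, and |M| = |V(G) - S|. -/
open SimpleGraph

attribute [local instance] Classical.propDecidable

variable {V : Type*}

/-- A set of vertices is independent if no two of its members are adjacent. -/
def IsIndepSet (G : SimpleGraph V) (s : Set V) : Prop :=
  ∀ ⦃a⦄, a ∈ s → ∀ ⦃b⦄, b ∈ s → ¬ G.Adj a b

/-- The independence number α(G). -/
noncomputable def indepNum (G : SimpleGraph V) [Fintype V] : ℕ :=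
  sSup {n | ∃ s : Finset V, _root_.IsIndepSet G ↑s ∧ s.card = n}

/-- The matching number μ(G). -/
noncomputable def matchNum (G : SimpleGraph V) [Fintype V] : ℕ :=
  sSup {n | ∃ M : G.Subgraph, M.IsMatching ∧ M.edgeSet.ncard = n}

/-- A König-Egerváry graph: α(G) + μ(G) = |V(G)|. -/
def KonigEgervary (G : SimpleGraph V) [Fintype V] : Prop :=
  _root_.indepNum G + matchNum G = Fintype.card V

/-- A maximum independent set. -/
def IsMaxIndepSet (G : SimpleGraph V) [Fintype V] (s : Finset V) : Prop :=
  _root_.IsIndepSet G ↑s ∧ s.card = _root_.indepNum G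

/-- A maximum matching. -/
def IsMaximumMatching (G : SimpleGraph V) [Fintype V] (M : G.Subgraph) : Prop :=
  M.IsMatching ∧ M.edgeSet.ncard = matchNum G

/-- A leaf: a vertex with exactly one neighbour. -/
def IsLeaf (G : SimpleGraph V) (v : V) : Prop := ∃! u, G.Adj v u

/-- A cycle `p` is `M`-alternating if of every two distinct incident edges of
the cycle exactly one belongs to `M`. -/
def IsAlternatingCycle (G : SimpleGraph V) (M : Set (Sym2 V)) {v : V} (p : G.Walk v v) : Prop :=
  p.IsCycle ∧ ∀ e f : Sym2 V, e ∈ p.edges → f ∈ p.edges → e ≠ f →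
    (∃ x, x ∈ e ∧ x ∈ f) → (e ∈ M ↔ f ∉ M)

/-- `G` contains an `M`-alternating cycle. -/
def HasAlternatingCycle (G : SimpleGraph V) (M : Set (Sym2 V)) : Prop :=
  ∃ (v : V) (p : G.Walk v v), IsAlternatingCycle G M p

/-- `G` is unicyclic: it has exactly one cycle (up to its edge set). -/
def UniqueCycle (G : SimpleGraph V) : Prop :=
  ∃! c : Set (Sym2 V), ∃ (v : V) (p : G.Walk v v), p.IsCycle ∧ c = {e | e ∈ p.edges}

/-- The core of `G`: the intersection of all maximum independent sets. -/
def core (G : SimpleGraph V) [Fintype V] : Set V :=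
  {v | ∀ s : Finset V, IsMaxIndepSet G s → v ∈ s}

theorem IsIndepSet.notMem_of_adj {G : SimpleGraph V} {s : Set V}
    (hs : _root_.IsIndepSet G s) {a b : V} (hab : G.Adj a b) (ha : a ∈ s) : b ∉ s :=
  fun hb => hs ha hb hab

/-- Sending each vertex of `M` outside `s` to its `M`-edge covers `M.edgeSet`, since `s` is
independent; it is not injective, since the edge `s(a, b)` has both ends outside `s`. -/
theorem SimpleGraph.Subgraph.IsMatching.ncard_edgeSet_add_ncard_lt [Finite V] {G : SimpleGraph V}
    {M : G.Subgraph} (hM : M.IsMatching) {s : Set V} (hs : _root_.IsIndepSet G s) {a b : V}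
    (hab : M.Adj a b) (ha : a ∉ s) (hb : b ∉ s) :
    M.edgeSet.ncard + s.ncard < Nat.card V := by
  let edgeAt : ∀ v ∈ M.verts \ s, Sym2 V := fun v hv => hM.toEdge ⟨v, hv.1⟩
  have hcover : ∀ e ∈ M.edgeSet, ∃ v hv, edgeAt v hv = e := by
    intro e he
    induction e using Sym2.ind with
    | _ x y =>
      by_cases hx : x ∈ s
      · have hy : y ∉ s := hs.notMem_of_adj (M.adj_sub he) hx
        refine ⟨y, ⟨he.snd_mem, hy⟩, ?_⟩
        simp only [edgeAt, hM.toEdge_eq_of_adj he.symm, Sym2.eq_swap]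
      · exact ⟨x, ⟨he.fst_mem, hx⟩, by simp only [edgeAt, hM.toEdge_eq_of_adj he]⟩
  have hlt : M.edgeSet.ncard < (M.verts \ s).ncard := by
    by_contra! hle
    exact hab.ne <| Set.inj_on_of_surj_on_of_ncard_le edgeAt
      (fun v hv => (hM.toEdge ⟨v, hv.1⟩).2) hcover hle ⟨hab.fst_mem, ha⟩ ⟨hab.snd_mem, hb⟩
      (congrArg Subtype.val (hM.toEdge_eq_toEdge_of_adj hab))
  calc M.edgeSet.ncard + s.ncard < (M.verts \ s).ncard + s.ncard := by omega
    _ ≤ sᶜ.ncard + s.ncard :=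
      Nat.add_le_add_right (Set.ncard_le_ncard (Set.sdiff_subset_compl _ _)) _
    _ = Nat.card V := by rw [add_comm, Set.ncard_add_ncard_compl]

theorem stmt0 (G : SimpleGraph V) [Fintype V] (hKE : KonigEgervary G)
    (M : G.Subgraph) (hM : IsMaximumMatching G M)
    (S : Finset V) (hS : IsMaxIndepSet G S) :
    (∀ e ∈ M.edgeSet, ∃ a b, e = s(a, b) ∧ a ∈ S ∧ b ∉ S) ∧
      M.edgeSet.ncard = Fintype.card V - S.card := by
  obtain ⟨hMm, hMc⟩ := hM
  obtain ⟨hSi, hSc⟩ := hS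
  have hsum : M.edgeSet.ncard + S.card = Fintype.card V := by
    rw [hMc, hSc, add_comm]
    exact hKE
  refine ⟨fun e he => ?_, by omega⟩
  induction e using Sym2.ind with
  | _ a b =>
    by_cases ha : a ∈ S
    · exact ⟨a, b, rfl, ha, hSi.notMem_of_adj (M.adj_sub he) ha⟩
    by_cases hb : b ∈ S
    · exact ⟨b, a, Sym2.eq_swap, hb, ha⟩
    have hlt := hMm.ncard_edgeSet_add_ncard_lt hSi he ha hb
    rw [Set.ncard_coe_finset, Nat.card_eq_fintype_card] at hlt
    omega
end

section
/- A matching M in a graph G is uniquely restricted if and only if G contains no M-alternating cycle. -/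
open SimpleGraph

attribute [local instance] Classical.propDecidable

variable {V : Type*}

/-! The symmetric difference of two matchings covering the same vertices is a disjoint union of
cycles alternating between them, so a second such matching yields an `M`-alternating cycle.
Conversely, switching `M` along an `M`-alternating cycle gives a different matching covering the
same vertices. -/

open scoped symmDiff

namespace SimpleGraph

variable {G H K : SimpleGraph V} {M M' : G.Subgraph} {v w : V}

theorem symmDiff_adj : (G ∆ H).Adj v w ↔ (G.Adj v w ∧ ¬H.Adj v w) ∨ (H.Adj v w ∧ ¬G.Adj v w) := by
  simp [symmDiff_def]

theorem isAlternatingCycle_iff {p : G.Walk v v} :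
    IsAlternatingCycle G K.edgeSet p ↔ p.IsCycle ∧ p.toSubgraph.spanningCoe.IsAlternating K := by
  refine and_congr_right fun hp => ⟨fun halt x a b hab ha hb => ?_, fun halt e f he hf hef hx => ?_⟩
  · have hedge : ∀ {c}, p.toSubgraph.spanningCoe.Adj x c → s(x, c) ∈ p.edges := fun h =>
      p.mem_edges_toSubgraph.mp (Subgraph.mem_edgeSet.mpr h)
    simpa using halt _ _ (hedge ha) (hedge hb) (Sym2.congr_right.not.mpr hab) ⟨x, by simp, by simp⟩
  · obtain ⟨x, hxe, hxf⟩ := hx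
    obtain ⟨a, rfl⟩ := Sym2.mem_iff_exists.mp hxe
    obtain ⟨b, rfl⟩ := Sym2.mem_iff_exists.mp hxf
    have hadj : ∀ {c}, s(x, c) ∈ p.edges → p.toSubgraph.spanningCoe.Adj x c := fun h =>
      Subgraph.mem_edgeSet.mp (p.mem_edges_toSubgraph.mpr h)
    simpa using halt (fun hab : a = b => hef (by rw [hab])) (hadj he) (hadj hf)

theorem IsAlternating.mem_verts_of_adj (halt : H.IsAlternating M.spanningCoe)
    (hcyc : H.IsCycles) (h : H.Adj v w) : v ∈ M.verts := by
  obtain ⟨w', hww', hw'⟩ := hcyc.other_adj_of_adj h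
  by_cases hvw : M.Adj v w
  · exact M.edge_vert hvw
  · exact M.edge_vert (by simpa [hvw] using halt hww' h hw')

theorem Subgraph.IsMatching.existsUnique_symmDiff_adj (hM : M.IsMatching)
    (halt : H.IsAlternating M.spanningCoe) (hcyc : H.IsCycles) (hv : v ∈ M.verts) :
    ∃! w, (M.spanningCoe ∆ H).Adj v w := by
  obtain ⟨w, hw, hwu⟩ := hM hv
  simp only [symmDiff_adj, Subgraph.spanningCoe_adj]
  by_cases hHw : H.Adj v w
  · obtain ⟨w', ⟨hww', hw'⟩, hw'u⟩ := hcyc.existsUnique_ne_adj hHw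
    have hMw' : ¬M.Adj v w' := by simpa [hw] using halt hww' hHw hw'
    refine ⟨w', Or.inr ⟨hw', hMw'⟩, ?_⟩
    rintro y (⟨hy, hHy⟩ | ⟨hy, hMy⟩)
    · exact absurd (hwu y hy ▸ hHw) hHy
    · exact hw'u y ⟨fun h => hMy (h ▸ hw), hy⟩
  · refine ⟨w, Or.inl ⟨hw, hHw⟩, ?_⟩
    rintro y (⟨hy, -⟩ | ⟨hy, hMy⟩)
    · exact hwu y hy
    · obtain ⟨y', hyy', hy'⟩ := hcyc.other_adj_of_adj hy
      have hMy' : M.Adj v y' := by simpa [hMy] using halt hyy' hy hy'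
      exact absurd (hwu y' hMy' ▸ hy') hHw

theorem Subgraph.IsMatching.exists_ne_of_isAlternating (hM : M.IsMatching) (hHG : H ≤ G)
    (halt : H.IsAlternating M.spanningCoe) (hcyc : H.IsCycles) (h : H.Adj v w) :
    ∃ M' : G.Subgraph, M'.IsMatching ∧ M'.verts = M.verts ∧ M' ≠ M := by
  have hle : M.spanningCoe ∆ H ≤ G := symmDiff_le_sup.trans (sup_le M.spanningCoe_le hHG)
  have hverts : ∀ {a b}, (M.spanningCoe ∆ H).Adj a b → b ∈ M.verts := by
    rintro a b (⟨hab, -⟩ | ⟨hab, -⟩)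
    exacts [M.edge_vert hab.symm, halt.mem_verts_of_adj hcyc hab.symm]
  refine ⟨(SimpleGraph.toSubgraph (M.spanningCoe ∆ H) hle).induce M.verts, fun x hx => ?_, rfl,
    fun heq => ?_⟩
  · obtain ⟨y, hy, hyu⟩ := hM.existsUnique_symmDiff_adj halt hcyc hx
    exact ⟨y, ⟨hx, hverts hy, hy⟩, fun z hz => hyu z hz.2.2⟩
  · have hiff := congrArg (fun M : G.Subgraph => M.Adj v w) heq
    simp only [Subgraph.induce_adj, toSubgraph_adj, symmDiff_adj, Subgraph.spanningCoe_adj,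
      eq_iff_iff] at hiff
    have hv := halt.mem_verts_of_adj hcyc h
    have hw := halt.mem_verts_of_adj hcyc h.symm
    tauto

theorem Subgraph.IsMatching.symmDiff_spanningCoe_adj_iff (hM : M.IsMatching)
    (hM' : M'.IsMatching) {w₁ w₂ y : V} (h₁ : M.Adj v w₁) (h₂ : M'.Adj v w₂) :
    (M.spanningCoe ∆ M'.spanningCoe).Adj v y ↔ w₁ ≠ w₂ ∧ (y = w₁ ∨ y = w₂) := by
  have e₁ := fun y (h : M.Adj v y) => hM.eq_of_adj_left h h₁
  have e₂ := fun y (h : M'.Adj v y) => hM'.eq_of_adj_left h h₂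
  simp only [symmDiff_adj, Subgraph.spanningCoe_adj]
  grind

theorem Subgraph.mem_verts_of_symmDiff_spanningCoe_adj (hverts : M.verts = M'.verts)
    (h : (M.spanningCoe ∆ M'.spanningCoe).Adj v w) : v ∈ M.verts := by
  rcases symmDiff_adj.mp h with ⟨h, -⟩ | ⟨h, -⟩
  exacts [M.edge_vert h, hverts ▸ M'.edge_vert h]

theorem Subgraph.IsMatching.symmDiff_isCycles (hM : M.IsMatching) (hM' : M'.IsMatching)
    (hverts : M.verts = M'.verts) : (M.spanningCoe ∆ M'.spanningCoe).IsCycles := by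
  rintro v ⟨w, hw⟩
  have hv := Subgraph.mem_verts_of_symmDiff_spanningCoe_adj hverts hw
  obtain ⟨w₁, h₁, -⟩ := hM hv
  obtain ⟨w₂, h₂, -⟩ := hM' (hverts ▸ hv)
  have hadj := fun y => hM.symmDiff_spanningCoe_adj_iff hM' (y := y) h₁ h₂
  have hne : w₁ ≠ w₂ := ((hadj w).mp hw).1
  exact Set.ncard_eq_two.mpr ⟨w₁, w₂, hne, Set.ext fun y => by simp [hadj, hne]⟩

theorem Subgraph.IsMatching.isAlternating_symmDiff_left (hM : M.IsMatching)
    (hM' : M'.IsMatching) (hverts : M.verts = M'.verts) :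
    (M.spanningCoe ∆ M'.spanningCoe).IsAlternating M.spanningCoe := by
  intro v a b hab ha hb
  have hv := Subgraph.mem_verts_of_symmDiff_spanningCoe_adj hverts ha
  obtain ⟨w₁, h₁, -⟩ := hM hv
  obtain ⟨w₂, h₂, -⟩ := hM' (hverts ▸ hv)
  have hM₁ : ∀ {y}, M.Adj v y ↔ y = w₁ := ⟨fun h => hM.eq_of_adj_left h h₁, fun h => h ▸ h₁⟩
  rw [hM.symmDiff_spanningCoe_adj_iff hM' h₁ h₂] at ha hb
  simp only [Subgraph.spanningCoe_adj, hM₁]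
  grind

theorem Subgraph.exists_symmDiff_spanningCoe_adj_of_ne (hverts : M.verts = M'.verts)
    (hne : M ≠ M') : ∃ v w, (M.spanningCoe ∆ M'.spanningCoe).Adj v w := by
  contrapose! hne
  refine Subgraph.ext hverts (funext₂ fun v w => propext ?_)
  have := hne v w
  simp only [symmDiff_adj, Subgraph.spanningCoe_adj] at this
  tauto

theorem Walk.IsCycle.isAlternatingCycle_mapLe {p : H.Walk v v} (hp : p.IsCycle) (hHG : H ≤ G)
    (halt : H.IsAlternating K) : IsAlternatingCycle G K.edgeSet (p.mapLe hHG) := by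
  refine isAlternatingCycle_iff.mpr ⟨(Walk.isCycle_mapLe hHG).mpr hp, halt.mono fun a b h => ?_⟩
  simp only [Subgraph.spanningCoe_adj, Walk.adj_toSubgraph_mapLe] at h
  exact h.adj_sub

theorem IsCycles.hasAlternatingCycle [Finite V] (hcyc : H.IsCycles) (hHG : H ≤ G)
    (halt : H.IsAlternating K) (h : H.Adj v w) : HasAlternatingCycle G K.edgeSet := by
  obtain ⟨u, c, hc, -⟩ := adj_and_reachable_delete_edges_iff_exists_cycle.mp
    ⟨h, hcyc.reachable_deleteEdges h⟩
  exact ⟨u, c.mapLe hHG, hc.isAlternatingCycle_mapLe hHG halt⟩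

end SimpleGraph

theorem stmt1 (G : SimpleGraph V) [Fintype V] (M : G.Subgraph) (hM : M.IsMatching) :
    (∀ M' : G.Subgraph, M'.IsMatching → M'.verts = M.verts → M' = M) ↔
      ¬ HasAlternatingCycle G M.edgeSet := by
  rw [← Subgraph.edgeSet_spanningCoe]
  constructor
  · rintro huniq ⟨v, p, hp⟩
    obtain ⟨hcyc, halt⟩ := isAlternatingCycle_iff.mp hp
    obtain ⟨M', hM', hverts, hne⟩ := hM.exists_ne_of_isAlternating p.toSubgraph.spanningCoe_le
      halt hcyc.isCycles_spanningCoe_toSubgraph (p.toSubgraph_adj_snd hcyc.not_nil)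
    exact hne (huniq M' hM' hverts)
  · intro hno M' hM' hverts
    by_contra hne
    obtain ⟨v, w, hvw⟩ :=
      Subgraph.exists_symmDiff_spanningCoe_adj_of_ne hverts.symm (Ne.symm hne)
    exact hno <| (hM.symmDiff_isCycles hM' hverts.symm).hasAlternatingCycle
      (symmDiff_le_sup.trans (sup_le M.spanningCoe_le M'.spanningCoe_le))
      (hM.isAlternating_symmDiff_left hM' hverts.symm) hvw
end

section
/- If a graph G without isolated vertices has a unique maximum matching, then this matching is perfect. -/
/-! If a vertex `v` is missed by a maximum matching `M`, pick a neighbour `u` of `v`. If `u` is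
missed as well, `M + vu` is a larger matching; otherwise `u` is matched to some `w`, and trading
the edge `uw` for `vu` gives a second maximum matching, which covers `v` and so differs from `M`. -/

open SimpleGraph

attribute [local instance] Classical.propDecidable

variable {V : Type*}

namespace SimpleGraph.Subgraph

variable {G : SimpleGraph V} {M : G.Subgraph} {u v w x : V}

lemma IsMatching.eq_of_mem_edgeSet (hM : M.IsMatching) {e f : Sym2 V} (he : e ∈ M.edgeSet)
    (hf : f ∈ M.edgeSet) (hxe : x ∈ e) (hxf : x ∈ f) : e = f := by
  have he' : M.Adj x (Sym2.Mem.other hxe) := by rwa [← Subgraph.mem_edgeSet, Sym2.other_spec]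
  have hf' : M.Adj x (Sym2.Mem.other hxf) := by rwa [← Subgraph.mem_edgeSet, Sym2.other_spec]
  rw [← Sym2.other_spec hxe, ← Sym2.other_spec hxf, hM.eq_of_adj_left he' hf']

lemma IsMatching.sup_subgraphOfAdj (hM : M.IsMatching) (hv : v ∉ M.verts) (hu : u ∉ M.verts)
    (h : G.Adj v u) : (M ⊔ G.subgraphOfAdj h).IsMatching := by
  refine hM.sup (.subgraphOfAdj h) (Set.disjoint_left.mpr fun x hx hx' => ?_)
  have hxM := M.support_subset_verts hx
  rcases (G.subgraphOfAdj h).support_subset_verts hx' with rfl | rfl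
  exacts [hv hxM, hu hxM]

lemma ncard_edgeSet_sup_subgraphOfAdj [Finite V] (hv : v ∉ M.verts) (h : G.Adj v u) :
    (M ⊔ G.subgraphOfAdj h).edgeSet.ncard = M.edgeSet.ncard + 1 := by
  rw [edgeSet_sup, edgeSet_subgraphOfAdj, Set.union_singleton,
    Set.ncard_insert_of_notMem (fun he : s(v, u) ∈ M.edgeSet => hv (M.edge_vert he))
      (Set.toFinite _)]

lemma IsMatching.deleteVerts_of_adj (hM : M.IsMatching) (huw : M.Adj u w) :
    (M.deleteVerts {u, w}).IsMatching := by
  rintro x ⟨hxM, hx⟩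
  obtain ⟨y, hxy, hy⟩ := hM hxM
  have hyuw : y ∉ ({u, w} : Set V) := fun hy' => hx <| by
    have hyx := hM.eq_of_mem_edgeSet (Subgraph.mem_edgeSet.mpr hxy.symm)
      (Subgraph.mem_edgeSet.mpr huw) (Sym2.mem_mk_left y x) (Sym2.mem_iff.mpr hy')
    exact Sym2.mem_iff.mp (hyx ▸ Sym2.mem_mk_right y x)
  exact ⟨y, deleteVerts_adj.mpr ⟨hxM, hx, M.edge_vert hxy.symm, hyuw, hxy⟩,
    fun y' hy' => hy y' (deleteVerts_adj.mp hy').2.2.2.2⟩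

lemma IsMatching.edgeSet_deleteVerts_of_adj (hM : M.IsMatching) (huw : M.Adj u w) :
    (M.deleteVerts {u, w}).edgeSet = M.edgeSet \ {s(u, w)} := by
  have hnotMem {a b : V} (hab : M.Adj a b) (hne : s(a, b) ≠ s(u, w)) : a ∉ ({u, w} : Set V) :=
    fun ha => hne (hM.eq_of_mem_edgeSet (Subgraph.mem_edgeSet.mpr hab)
      (Subgraph.mem_edgeSet.mpr huw) (Sym2.mem_mk_left a b) (Sym2.mem_iff.mpr ha))
  refine Set.ext (Sym2.ind fun a b => ?_)
  simp only [Set.mem_sdiff, Set.mem_singleton_iff, Subgraph.mem_edgeSet, deleteVerts_adj]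
  constructor
  · rintro ⟨-, ha, -, -, hab⟩
    exact ⟨hab, fun he => ha (Sym2.mem_iff.mp (he ▸ Sym2.mem_mk_left a b))⟩
  · rintro ⟨hab, hne⟩
    exact ⟨M.edge_vert hab, hnotMem hab hne, M.edge_vert hab.symm,
      hnotMem hab.symm (by rwa [Sym2.eq_swap]), hab⟩

lemma IsMatching.exists_isMatching_adj_ncard_le [Finite V] (hM : M.IsMatching)
    (hv : v ∉ M.verts) (h : G.Adj v u) :
    ∃ N : G.Subgraph, N.IsMatching ∧ N.Adj v u ∧ M.edgeSet.ncard ≤ N.edgeSet.ncard := by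
  by_cases hu : u ∈ M.verts
  · obtain ⟨w, huw, -⟩ := hM hu
    have hvD : v ∉ (M.deleteVerts {u, w}).verts := fun hvD => hv hvD.1
    refine ⟨_, (hM.deleteVerts_of_adj huw).sup_subgraphOfAdj hvD (fun huD => huD.2 (by simp)) h,
      by simp, ?_⟩
    rw [ncard_edgeSet_sup_subgraphOfAdj hvD, hM.edgeSet_deleteVerts_of_adj huw,
      Set.ncard_sdiff_singleton_add_one (Subgraph.mem_edgeSet.mpr huw) (Set.toFinite _)]
  · refine ⟨_, hM.sup_subgraphOfAdj hv hu h, by simp, ?_⟩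
    rw [ncard_edgeSet_sup_subgraphOfAdj hv h]
    exact Nat.le_succ _

end SimpleGraph.Subgraph

lemma le_matchNum [Fintype V] {G : SimpleGraph V} {N : G.Subgraph} (hN : N.IsMatching) :
    N.edgeSet.ncard ≤ matchNum G :=
  le_csSup ⟨Nat.card (Sym2 V), by rintro n ⟨N, -, rfl⟩; exact Set.ncard_le_card _⟩ ⟨N, hN, rfl⟩

theorem stmt2 (G : SimpleGraph V) [Fintype V] (hiso : ∀ v, ∃ u, G.Adj v u)
    (M : G.Subgraph) (hM : IsMaximumMatching G M)
    (huniq : ∀ M' : G.Subgraph, IsMaximumMatching G M' → M' = M) :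
    M.IsPerfectMatching := by
  refine ⟨hM.1, fun v => ?_⟩
  by_contra hv
  obtain ⟨u, hvu⟩ := hiso v
  obtain ⟨N, hN, hNvu, hle⟩ := hM.1.exists_isMatching_adj_ncard_le hv hvu
  have hNmax : IsMaximumMatching G N := ⟨hN, le_antisymm (le_matchNum hN) (hM.2 ▸ hle)⟩
  exact hv (huniq N hNmax ▸ N.edge_vert hNvu)
end

section
/- If G = (A, B, E) is a bipartite graph with a unique perfect matching, then both parts A and B contain a leaf of G. -/
open SimpleGraph

attribute [local instance] Classical.propDecidable

variable {V : Type*}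

/-! If no vertex of `A` is a leaf, the partner of each `b ∈ B` in the perfect matching `M` has a
second neighbour `φ b ∈ B`. Since `B` is finite, `φ` has periodic points, on which it is a
permutation `σ ≠ 1`. Re-pairing the partner of every `b` with `σ b` swaps `M` along the
alternating cycles traced by `σ` and yields a second perfect matching. -/

namespace Function

variable {α : Type*}

theorem nonempty_periodicPts [Finite α] [Nonempty α] (f : α → α) : (periodicPts f).Nonempty := by
  obtain ⟨x⟩ := ‹Nonempty α›
  obtain ⟨m, n, hmn, heq⟩ :=
    Set.finite_univ.exists_lt_map_eq_of_forall_mem (f := fun n ↦ f^[n] x) fun _ ↦ Set.mem_univ _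
  refine ⟨f^[m] x, mk_mem_periodicPts (n := n - m) (by omega) ?_⟩
  rw [IsPeriodicPt, IsFixedPt, ← iterate_add_apply, Nat.sub_add_cancel hmn.le]
  exact heq.symm

theorem exists_perm_ne_one_of_forall_ne [Finite α] [Nonempty α] {f : α → α} (hf : ∀ x, f x ≠ x) :
    ∃ σ : Equiv.Perm α, σ ≠ 1 ∧ ∀ x, σ x = x ∨ σ x = f x := by
  classical
  let σ := Equiv.Perm.ofSubtype ((bijOn_periodicPts f).equiv _)
  obtain ⟨x, hx⟩ := nonempty_periodicPts f
  have hσ : ∀ y ∈ periodicPts f, σ y = f y := fun y hy ↦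
    Equiv.Perm.ofSubtype_apply_of_mem _ hy
  refine ⟨σ, fun h ↦ hf x ?_, fun y ↦ ?_⟩
  · simpa [h] using (hσ x hx).symm
  · by_cases hy : y ∈ periodicPts f
    · exact .inr (hσ y hy)
    · exact .inl (Equiv.Perm.ofSubtype_apply_of_not_mem _ hy)

end Function

namespace SimpleGraph.Subgraph

variable {G : SimpleGraph V} {M : G.Subgraph} {B : Set V}

def twist (M : G.Subgraph) (σ : Equiv.Perm B)
    (hσ : ∀ (b : B) u, M.Adj u b → G.Adj u (σ b)) : G.Subgraph where
  verts := Set.univ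
  Adj u v := (∃ b : B, M.Adj u b ∧ v = σ b) ∨ ∃ b : B, M.Adj v b ∧ u = σ b
  adj_sub := by
    rintro u v (⟨b, hub, rfl⟩ | ⟨b, hvb, rfl⟩)
    · exact hσ b u hub
    · exact (hσ b v hvb).symm
  edge_vert _ := Set.mem_univ _
  symm := ⟨fun _ _ ↦ Or.symm⟩

variable {σ : Equiv.Perm B} {hσ : ∀ (b : B) u, M.Adj u b → G.Adj u (σ b)}

theorem isPerfectMatching_twist (hM : M.IsPerfectMatching)
    (hMB : ∀ u v, M.Adj u v → (u ∈ B ↔ v ∉ B)) : (M.twist σ hσ).IsPerfectMatching := by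
  rw [isPerfectMatching_iff]
  intro u
  by_cases hu : u ∈ B
  · obtain ⟨a, hab, -⟩ := hM.1 (hM.2 (σ.symm ⟨u, hu⟩))
    refine ⟨a, .inr ⟨_, hab.symm, by simp⟩, ?_⟩
    rintro v (⟨b, hub, -⟩ | ⟨b, hvb, hb⟩)
    · exact absurd b.2 ((hMB u b hub).1 hu)
    · obtain rfl : b = σ.symm ⟨u, hu⟩ := σ.eq_symm_apply.mpr (Subtype.ext hb.symm)
      exact hM.1.eq_of_adj_right hvb hab.symm
  · obtain ⟨b, hub, -⟩ := hM.1 (hM.2 u)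
    have hb : b ∈ B := by simpa [hu] using hMB u b hub
    refine ⟨σ ⟨b, hb⟩, .inl ⟨_, hub, rfl⟩, ?_⟩
    rintro v (⟨b', hub', rfl⟩ | ⟨b', -, rfl⟩)
    · obtain rfl : ⟨b, hb⟩ = b' := Subtype.ext (hM.1.eq_of_adj_left hub hub')
      rfl
    · exact absurd (σ b').2 hu

theorem eq_one_of_twist_eq (hM : M.IsPerfectMatching) (htwist : M.twist σ hσ = M) : σ = 1 := by
  ext b
  obtain ⟨a, hab, -⟩ := hM.1 (hM.2 b)
  have hσb : (M.twist σ hσ).Adj a (σ b) := .inl ⟨b, hab.symm, rfl⟩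
  rw [htwist] at hσb
  exact (hM.1.eq_of_adj_left hab.symm hσb).symm

end SimpleGraph.Subgraph

theorem exists_isLeaf_of_existsUnique_isPerfectMatching {G : SimpleGraph V} [Finite V]
    [Nonempty V] {A B : Set V} (hdisj : Disjoint A B)
    (hbip : ∀ a b, G.Adj a b → (a ∈ A ∧ b ∈ B) ∨ (a ∈ B ∧ b ∈ A))
    (hupm : ∃! M : G.Subgraph, M.IsPerfectMatching) : ∃ a ∈ A, IsLeaf G a := by
  obtain ⟨M, hM, huniq⟩ := hupm
  have hnotB {v} (hv : v ∈ A) : v ∉ B := Set.disjoint_left.mp hdisj hv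
  by_contra! hno
  have hstep (b : B) : ∃ c : B, c ≠ b ∧ ∀ u, M.Adj u b → G.Adj u c := by
    obtain ⟨a, hba, hmate⟩ := hM.1 (hM.2 b)
    have haA : a ∈ A := ((hbip _ _ (M.adj_sub hba)).resolve_left fun h ↦ hnotB h.1 b.2).2
    obtain ⟨c, hac, hcb⟩ : ∃ c, G.Adj a c ∧ c ≠ b := by
      by_contra! h
      exact hno a haA ⟨b, (M.adj_sub hba).symm, h⟩
    have hcB : c ∈ B := ((hbip _ _ hac).resolve_right fun h ↦ hnotB haA h.1).2
    exact ⟨⟨c, hcB⟩, fun h ↦ hcb (congrArg Subtype.val h), fun u hu ↦ hmate u hu.symm ▸ hac⟩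
  choose φ hφne hφadj using hstep
  have : Nonempty B := by
    obtain ⟨v⟩ := ‹Nonempty V›
    obtain ⟨w, hvw, -⟩ := hM.1 (hM.2 v)
    rcases hbip v w (M.adj_sub hvw) with ⟨-, hw⟩ | ⟨hv, -⟩
    exacts [⟨⟨w, hw⟩⟩, ⟨⟨v, hv⟩⟩]
  obtain ⟨σ, hσ1, hσφ⟩ := Function.exists_perm_ne_one_of_forall_ne hφne
  have hσ (b : B) (u : V) (hub : M.Adj u b) : G.Adj u (σ b) := by
    rcases hσφ b with h | h <;> rw [h]
    exacts [M.adj_sub hub, hφadj b u hub]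
  have hMB (u v : V) (huv : M.Adj u v) : u ∈ B ↔ v ∉ B := by
    rcases hbip u v (M.adj_sub huv) with ⟨hu, hv⟩ | ⟨hu, hv⟩
    · exact iff_of_false (hnotB hu) (not_not.mpr hv)
    · exact iff_of_true hu (hnotB hv)
  exact hσ1 <| Subgraph.eq_one_of_twist_eq hM <|
    huniq (M.twist σ hσ) (Subgraph.isPerfectMatching_twist hM hMB)

theorem stmt3_general (G : SimpleGraph V) [Fintype V] [Nonempty V] (A B : Set V)
    (hdisj : Disjoint A B)
    (hbip : ∀ a b, G.Adj a b → (a ∈ A ∧ b ∈ B) ∨ (a ∈ B ∧ b ∈ A))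
    (hupm : ∃! M : G.Subgraph, M.IsPerfectMatching) :
    (∃ a ∈ A, IsLeaf G a) ∧ (∃ b ∈ B, IsLeaf G b) :=
  ⟨exists_isLeaf_of_existsUnique_isPerfectMatching hdisj hbip hupm,
    exists_isLeaf_of_existsUnique_isPerfectMatching hdisj.symm
      (fun a b h ↦ (hbip a b h).symm) hupm⟩

theorem stmt3 (G : SimpleGraph V) [Fintype V] [Nonempty V] (A B : Set V)
    (hdisj : Disjoint A B) (hcover : ∀ v, v ∈ A ∨ v ∈ B)
    (hbip : ∀ a b, G.Adj a b → (a ∈ A ∧ b ∈ B) ∨ (a ∈ B ∧ b ∈ A))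
    (hupm : ∃! M : G.Subgraph, M.IsPerfectMatching) :
    (∃ a ∈ A, IsLeaf G a) ∧ (∃ b ∈ B, IsLeaf G b) :=
  stmt3_general G A B hdisj hbip hupm
end

section
/- A bipartite graph with a unique perfect matching has at least two leaves. -/
open SimpleGraph

attribute [local instance] Classical.propDecidable

variable {V : Type*}

/-!
Let `S`, `Sᶜ` be the colour classes and `μ` the partner map of the perfect matching `M`. If no
vertex of `S` were a leaf, every `x ∈ S` would have a neighbour `b x ≠ μ x`, and `g = μ ∘ b` would
map `S` into itself. On the set `C` of periodic points of `g` in `S`, the edges `x b(x)` and the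
`M`-edges at `C` form `M`-alternating cycles: since `g` permutes `C`, every vertex they touch
meets exactly one edge of each kind. Switching `M` along these cycles gives a second perfect
matching, so each colour class contains a leaf.
-/

open Function Set
open scoped symmDiff

theorem Set.Finite.exists_nonempty_bijOn_of_mapsTo {α : Type*} {g : α → α} {s : Set α}
    (hs : s.Finite) (hne : s.Nonempty) (h : MapsTo g s s) :
    ∃ t ⊆ s, t.Nonempty ∧ BijOn g t t := by
  obtain ⟨x, hx⟩ := hne
  obtain ⟨m, n, hmn, heq⟩ :=
    hs.exists_lt_map_eq_of_forall_mem (f := fun k : ℕ ↦ g^[k] x) fun k ↦ h.iterate k hx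
  have hper : g^[m] x ∈ periodicPts g := by
    refine mk_mem_periodicPts (n := n - m) (by omega) ?_
    change g^[n - m] (g^[m] x) = g^[m] x
    rw [← iterate_add_apply, Nat.sub_add_cancel hmn.le]
    exact heq.symm
  have hmaps : MapsTo g (s ∩ periodicPts g) (s ∩ periodicPts g) :=
    h.inter_inter (bijOn_periodicPts g).mapsTo
  refine ⟨s ∩ periodicPts g, inter_subset_left, ⟨_, h.iterate m hx, hper⟩, ?_⟩
  exact ((hs.inter_of_left _).injOn_iff_bijOn_of_mapsTo hmaps).mp
    ((bijOn_periodicPts g).injOn.mono inter_subset_right)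

namespace SimpleGraph

variable {H M : SimpleGraph V}

theorem isCycles_of_neighborSet_eq_pair
    (h : ∀ v, (H.neighborSet v).Nonempty →
      ∃ p q, H.neighborSet v = {p, q} ∧ ¬M.Adj v p ∧ M.Adj v q) :
    H.IsCycles := by
  intro v hv
  obtain ⟨p, q, hpq, hp, hq⟩ := h v hv
  rw [hpq]
  exact ncard_pair fun h ↦ hp (h ▸ hq)

theorem isAlternating_of_neighborSet_eq_pair
    (h : ∀ v, (H.neighborSet v).Nonempty →
      ∃ p q, H.neighborSet v = {p, q} ∧ ¬M.Adj v p ∧ M.Adj v q) :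
    H.IsAlternating M := by
  intro v w w' hww' hw hw'
  obtain ⟨p, q, hpq, hp, hq⟩ := h v ⟨w, hw⟩
  have hw : w = p ∨ w = q := by simpa [← mem_neighborSet, hpq] using hw
  have hw' : w' = p ∨ w' = q := by simpa [← mem_neighborSet, hpq] using hw'
  rcases hw with rfl | rfl <;> rcases hw' with rfl | rfl <;> tauto

def switchGraph (M : SimpleGraph V) (C : Set V) (b : V → V) : SimpleGraph V :=
  fromRel fun u v ↦ u ∈ C ∧ (v = b u ∨ M.Adj u v)

variable {G : SimpleGraph V} {M : G.Subgraph} {C : Set V} {b g : V → V}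

theorem switchGraph_le (hb : ∀ x ∈ C, G.Adj x (b x)) : switchGraph M.spanningCoe C b ≤ G := by
  rintro u v ⟨-, ⟨hu, rfl | huv⟩ | ⟨hv, rfl | hvu⟩⟩
  · exact hb u hu
  · exact M.adj_sub huv
  · exact (hb v hv).symm
  · exact (M.adj_sub hvu).symm

theorem neighborSet_switchGraph_of_mem (hM : M.IsMatching) (hC : _root_.IsIndepSet G C)
    (hb : ∀ x ∈ C, G.Adj x (b x)) {x m : V} (hx : x ∈ C) (hxm : M.Adj x m) :
    (switchGraph M.spanningCoe C b).neighborSet x = {b x, m} := by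
  ext v
  simp only [mem_neighborSet, switchGraph, fromRel_adj, Subgraph.spanningCoe_adj,
    mem_insert_iff, mem_singleton_iff]
  constructor
  · rintro ⟨-, ⟨-, hv | hv⟩ | ⟨hv, hxv | hvx⟩⟩
    · exact .inl hv
    · exact .inr (hM.eq_of_adj_left hv hxm)
    · exact (hC hv hx (hxv ▸ hb v hv)).elim
    · exact (hC hv hx (M.adj_sub hvx)).elim
  · rintro (rfl | rfl)
    · exact ⟨(hb x hx).ne, .inl ⟨hx, .inl rfl⟩⟩
    · exact ⟨hxm.ne, .inl ⟨hx, .inr hxm⟩⟩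

theorem neighborSet_switchGraph_apply (hM : M.IsMatching) (hC : _root_.IsIndepSet G C)
    (hb : ∀ x ∈ C, G.Adj x (b x)) (hg : ∀ x ∈ C, M.Adj (b x) (g x)) (hbij : BijOn g C C)
    {x : V} (hx : x ∈ C) :
    (switchGraph M.spanningCoe C b).neighborSet (b x) = {x, g x} := by
  have hbx : b x ∉ C := fun h ↦ hC hx h (hb x hx)
  ext v
  simp only [mem_neighborSet, switchGraph, fromRel_adj, Subgraph.spanningCoe_adj,
    mem_insert_iff, mem_singleton_iff]
  constructor
  · rintro ⟨-, ⟨h, -⟩ | ⟨hv, hbv | hvb⟩⟩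
    · exact (hbx h).elim
    · exact .inl (hbij.injOn hv hx (hM.eq_of_adj_left (hbv ▸ hg v hv) (hg x hx)))
    · exact .inr (hM.eq_of_adj_left hvb.symm (hg x hx))
  · rintro (rfl | rfl)
    · exact ⟨(hb v hx).ne.symm, .inr ⟨hx, .inl rfl⟩⟩
    · exact ⟨(hg x hx).ne, .inr ⟨hbij.mapsTo hx, .inr (hg x hx).symm⟩⟩

theorem neighborSet_switchGraph_eq_empty (hM : M.IsMatching) (hg : ∀ x ∈ C, M.Adj (b x) (g x))
    (hbij : BijOn g C C) {w : V} (hw : w ∉ C) (hwb : w ∉ b '' C) :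
    (switchGraph M.spanningCoe C b).neighborSet w = ∅ := by
  refine eq_empty_of_forall_notMem ?_
  rintro v ⟨-, ⟨h, -⟩ | ⟨hv, rfl | hvw⟩⟩
  · exact hw h
  · exact hwb ⟨v, hv, rfl⟩
  · obtain ⟨y, hy, rfl⟩ := hbij.surjOn hv
    exact hwb ⟨y, hy, hM.eq_of_adj_right (hg y hy) hvw.symm⟩

theorem exists_neighborSet_switchGraph_eq_pair (hM : M.IsPerfectMatching)
    (hC : _root_.IsIndepSet G C) (hb : ∀ x ∈ C, G.Adj x (b x))
    (hbM : ∀ x ∈ C, ¬M.Adj x (b x)) (hg : ∀ x ∈ C, M.Adj (b x) (g x)) (hbij : BijOn g C C)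
    (v : V) (hv : ((switchGraph M.spanningCoe C b).neighborSet v).Nonempty) :
    ∃ p q, (switchGraph M.spanningCoe C b).neighborSet v = {p, q} ∧
      ¬M.spanningCoe.Adj v p ∧ M.spanningCoe.Adj v q := by
  by_cases hvC : v ∈ C
  · obtain ⟨m, hm, -⟩ := hM.1 (hM.2 v)
    exact ⟨b v, m, neighborSet_switchGraph_of_mem hM.1 hC hb hvC hm, hbM v hvC, hm⟩
  by_cases hvb : v ∈ b '' C
  · obtain ⟨x, hx, rfl⟩ := hvb
    exact ⟨x, g x, neighborSet_switchGraph_apply hM.1 hC hb hg hbij hx,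
      fun h ↦ hbM x hx h.symm, hg x hx⟩
  · rw [neighborSet_switchGraph_eq_empty hM.1 hg hbij hvC hvb] at hv
    exact absurd hv not_nonempty_empty

theorem Subgraph.IsPerfectMatching.exists_ne_of_bijOn (hM : M.IsPerfectMatching)
    (hC : _root_.IsIndepSet G C) (hCne : C.Nonempty) (hb : ∀ x ∈ C, G.Adj x (b x))
    (hbM : ∀ x ∈ C, ¬M.Adj x (b x)) (hg : ∀ x ∈ C, M.Adj (b x) (g x)) (hbij : BijOn g C C) :
    ∃ N : G.Subgraph, N.IsPerfectMatching ∧ N ≠ M := by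
  set H := switchGraph M.spanningCoe C b
  have hpair := exists_neighborSet_switchGraph_eq_pair hM hC hb hbM hg hbij
  have hperf := hM.symmDiff_of_isAlternating (isAlternating_of_neighborSet_eq_pair hpair)
    (isCycles_of_neighborSet_eq_pair hpair)
  have hle : M.spanningCoe ∆ H ≤ G :=
    symmDiff_le_sup.trans (sup_le M.spanningCoe_le (switchGraph_le hb))
  refine ⟨G.toSubgraph _ hle, ?_, fun hN ↦ ?_⟩
  · rw [Subgraph.isPerfectMatching_iff] at hperf ⊢
    simpa using hperf
  · obtain ⟨x, hx⟩ := hCne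
    have hH : H.Adj x (b x) := ⟨(hb x hx).ne, .inl ⟨hx, .inl rfl⟩⟩
    refine hbM x hx (hN ▸ ?_)
    change (M.spanningCoe ∆ H).Adj x (b x)
    rw [symmDiff_def]
    exact .inr ⟨hH, hbM x hx⟩

theorem Subgraph.IsPerfectMatching.exists_isLeaf_mem [Finite V] (hM : M.IsPerfectMatching)
    (hU : ∀ N : G.Subgraph, N.IsPerfectMatching → N = M) {S : Set V}
    (hS : _root_.IsIndepSet G S) (hSc : _root_.IsIndepSet G Sᶜ) (hne : S.Nonempty) :
    ∃ x ∈ S, IsLeaf G x := by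
  by_contra! hno
  choose μ hμ using fun v ↦ (hM.1 (hM.2 v)).exists
  have hexit : ∀ x ∈ S, ∃ y, G.Adj x y ∧ ¬M.Adj x y := by
    intro x hx
    by_contra! h
    exact hno x hx ⟨μ x, M.adj_sub (hμ x), fun y hy ↦ hM.1.eq_of_adj_left (h y hy) (hμ x)⟩
  choose! b hb hbM using hexit
  have hmaps : MapsTo (μ ∘ b) S S := by
    intro x hx
    by_contra h
    exact hSc (fun h' ↦ hS hx h' (hb x hx)) h (M.adj_sub (hμ (b x)))
  obtain ⟨C, hCS, hCne, hbij⟩ := (toFinite S).exists_nonempty_bijOn_of_mapsTo hne hmaps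
  obtain ⟨N, hN, hNM⟩ := hM.exists_ne_of_bijOn (fun x hx y hy ↦ hS (hCS hx) (hCS hy)) hCne
    (fun x hx ↦ hb x (hCS hx)) (fun x hx ↦ hbM x (hCS hx)) (fun x _ ↦ hμ (b x)) hbij
  exact hNM (hU N hN)

end SimpleGraph

theorem stmt4 (G : SimpleGraph V) [Fintype V] [Nonempty V] (hbip : G.Colorable 2)
    (hupm : ∃! M : G.Subgraph, M.IsPerfectMatching) :
    ∃ a b, a ≠ b ∧ IsLeaf G a ∧ IsLeaf G b := by
  obtain ⟨M, hM, hU⟩ := hupm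
  obtain ⟨c⟩ := hbip
  set S := {v | c v = 0}
  have hS : _root_.IsIndepSet G S := fun u hu v hv huv ↦ c.valid huv (hu.trans hv.symm)
  have hSc : _root_.IsIndepSet G Sᶜ := fun u hu v hv huv ↦
    c.valid huv ((Fin.eq_one_of_ne_zero _ hu).trans (Fin.eq_one_of_ne_zero _ hv).symm)
  obtain ⟨v⟩ := ‹Nonempty V›
  obtain ⟨w, hvw⟩ := (hM.1 (hM.2 v)).exists
  have hSne : S.Nonempty ∧ Sᶜ.Nonempty := by
    by_cases hv : v ∈ S
    · exact ⟨⟨v, hv⟩, w, fun hw ↦ hS hv hw (M.adj_sub hvw)⟩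
    · exact ⟨⟨w, by_contra fun hw ↦ hSc hv hw (M.adj_sub hvw)⟩, v, hv⟩
  obtain ⟨a, ha, hal⟩ := hM.exists_isLeaf_mem hU hS hSc hSne.1
  obtain ⟨b, hb, hbl⟩ := hM.exists_isLeaf_mem hU hSc (by rwa [compl_compl]) hSne.2
  exact ⟨a, b, fun h ↦ hb (h ▸ ha), hal, hbl⟩
end

section
/- Let G be a König-Egerváry graph with a unique perfect matching M, and let a be a leaf of G with its unique neighbor b. Then ab ∈ M, and G - {a, b} is a König-Egerváry graph whose unique perfect matching is M \ {ab}. -/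
open SimpleGraph

attribute [local instance] Classical.propDecidable

variable {V : Type*}

/-!
The `M`-partner of the leaf `a` is a neighbour of `a`, hence `b`. Since `M` is a matching, no
`M`-edge leaves `{a, b}ᶜ`, so `M` restricts to a perfect matching of `G - {a, b}`; conversely
every perfect matching of `G - {a, b}` extends by `ab` to one of `G`, which is `M` by uniqueness.
Both graphs have perfect matchings, so `μ` drops by exactly one. So does `α`: an independent set
of `G` meets the edge `ab` at most once, and an independent set of `G - {a, b}` extends by `a`.
-/

namespace SimpleGraph.Subgraph

variable {G : SimpleGraph V} {M : G.Subgraph}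

theorem IsMatching.ncard_verts [Finite V] (h : M.IsMatching) :
    M.verts.ncard = 2 * M.edgeSet.ncard := by
  have hfibre (e : M.edgeSet) : Nat.card {v // h.toEdge v = e} = 2 := by
    obtain ⟨e, he⟩ := e
    induction e using Sym2.ind with
    | _ u v =>
      change Nat.card (h.toEdge ⁻¹' {_}) = 2
      rw [h.toEdge_preimage_singleton he, Nat.card_coe_set_eq, Set.ncard_pair]
      simpa using (M.adj_sub he).ne
  have : Fintype M.edgeSet := Fintype.ofFinite _
  rw [← Nat.card_coe_set_eq, ← Nat.card_congr (Equiv.sigmaFiberEquiv h.toEdge), Nat.card_sigma,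
    Fintype.sum_congr _ _ hfibre, Finset.sum_const, smul_eq_mul, mul_comm,
    Finset.card_univ, ← Nat.card_eq_fintype_card, Nat.card_coe_set_eq]

theorem IsPerfectMatching.two_mul_ncard_edgeSet [Fintype V] (h : M.IsPerfectMatching) :
    2 * M.edgeSet.ncard = Fintype.card V := by
  rw [← h.1.ncard_verts, Subgraph.isSpanning_iff.mp h.2, Set.ncard_univ, Nat.card_eq_fintype_card]

theorem IsMatching.mem_compl_pair_of_adj {a b x y : V} (h : M.IsMatching) (hab : M.Adj a b)
    (hxy : M.Adj x y) (hx : x ∈ ({a, b}ᶜ : Set V)) : y ∈ ({a, b}ᶜ : Set V) := by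
  rintro (rfl | rfl)
  · exact hx (.inr (h.eq_of_adj_right hxy hab.symm))
  · exact hx (.inl (h.eq_of_adj_right hxy hab))

theorem IsPerfectMatching.adj_of_forall_adj_eq {a b : V} (h : M.IsPerfectMatching)
    (hleaf : ∀ u, G.Adj a u → u = b) : M.Adj a b := by
  obtain ⟨u, hau, -⟩ := h.1 (h.2 a)
  rwa [← hleaf u (M.adj_sub hau)]

theorem IsPerfectMatching.comap_induce {s : Set V} (h : M.IsPerfectMatching)
    (hs : ∀ ⦃x y⦄, M.Adj x y → x ∈ s → y ∈ s) :
    (M.comap (Embedding.induce s).toHom).IsPerfectMatching := by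
  refine ⟨fun x _ => ?_, fun x => h.2 x⟩
  obtain ⟨y, hxy, hy⟩ := h.1 (h.2 x)
  exact ⟨⟨y, hs hxy x.2⟩, ⟨M.adj_sub hxy, hxy⟩, fun z hz => Subtype.ext (hy z hz.2)⟩

theorem IsPerfectMatching.map_induce_sup_subgraphOfAdj {a b : V} (hab : G.Adj a b)
    {N : (G.induce ({a, b}ᶜ : Set V)).Subgraph} (hN : N.IsPerfectMatching) :
    (N.map (Embedding.induce _).toHom ⊔ G.subgraphOfAdj hab).IsPerfectMatching := by
  have hmap : (N.map (Embedding.induce _).toHom).IsMatching :=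
    hN.1.map _ Subtype.val_injective
  have hverts : (N.map (Embedding.induce _).toHom).verts = ({a, b}ᶜ : Set V) := by
    rw [map_verts, Subgraph.isSpanning_iff.mp hN.2, Set.image_univ]
    exact Subtype.range_coe
  refine ⟨hmap.sup (.subgraphOfAdj hab) ?_, ?_⟩
  · rw [hmap.support_eq_verts, hverts, support_subgraphOfAdj]
    exact disjoint_compl_left
  · rw [Subgraph.isSpanning_iff, verts_sup, hverts, subgraphOfAdj_verts]
    exact Set.compl_union_self _

end SimpleGraph.Subgraph

section IndependentSets

variable {G : SimpleGraph V}

theorem IsIndepSet.image_val {s : Set V} {t : Set s} (h : _root_.IsIndepSet (G.induce s) t) :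
    _root_.IsIndepSet G (Subtype.val '' t) := by
  rintro _ ⟨x, hx, rfl⟩ _ ⟨y, hy, rfl⟩
  exact h hx hy

theorem IsIndepSet.insert {s : Set V} {a : V} (h : _root_.IsIndepSet G s)
    (ha : ∀ x ∈ s, ¬ G.Adj a x) :
    _root_.IsIndepSet G (insert a s) := by
  rintro _ (rfl | hx) _ (rfl | hy)
  · exact G.loopless.irrefl _
  · exact ha _ hy
  · exact fun hxy => ha _ hx hxy.symm
  · exact h hx hy

variable [Fintype V]

theorem bddAbove_setOf_card_isIndepSet :
    BddAbove {n | ∃ s : Finset V, _root_.IsIndepSet G ↑s ∧ s.card = n} :=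
  ⟨Fintype.card V, by rintro n ⟨t, -, rfl⟩; exact t.card_le_univ⟩

theorem card_le_indepNum {s : Finset V} (h : _root_.IsIndepSet G ↑s) :
    s.card ≤ _root_.indepNum G :=
  le_csSup bddAbove_setOf_card_isIndepSet ⟨s, h, rfl⟩

theorem exists_isIndepSet_card_eq_indepNum :
    ∃ s : Finset V, _root_.IsIndepSet G ↑s ∧ s.card = _root_.indepNum G :=
  Nat.sSup_mem (s := {n | ∃ s : Finset V, _root_.IsIndepSet G ↑s ∧ s.card = n})
    ⟨0, ∅, fun _ hx => absurd hx (Finset.notMem_empty _), rfl⟩ bddAbove_setOf_card_isIndepSet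

theorem indepNum_le_indepNum_induce_compl_pair_add_one {a b : V} (hab : G.Adj a b) :
    _root_.indepNum G ≤ _root_.indepNum (G.induce ({a, b}ᶜ : Set V)) + 1 := by
  obtain ⟨S, hS, hSc⟩ := exists_isIndepSet_card_eq_indepNum (G := G)
  have hpair : (S.filter (· ∈ ({a, b} : Set V))).card ≤ 1 := by
    refine Finset.card_le_one.mpr fun x hx y hy => by_contra fun hxy => ?_
    simp only [Finset.mem_filter, Set.mem_insert_iff, Set.mem_singleton_iff] at hx hy
    have : G.Adj x y := by
      rcases hx.2 with rfl | rfl <;> rcases hy.2 with rfl | rfl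
      exacts [absurd rfl hxy, hab, hab.symm, absurd rfl hxy]
    exact hS hx.1 hy.1 this
  have hrest := card_le_indepNum (G := G.induce ({a, b}ᶜ : Set V))
    (s := S.subtype (· ∈ ({a, b}ᶜ : Set V)))
    fun _ hx _ hy => hS (Finset.mem_subtype.mp hx) (Finset.mem_subtype.mp hy)
  rw [Finset.card_subtype] at hrest
  have := Finset.card_filter_add_card_filter_not (s := S) (· ∈ ({a, b} : Set V))
  simp only [Set.mem_compl_iff] at hrest
  omega

theorem indepNum_induce_compl_pair_add_one_le {a b : V} (hleaf : ∀ u, G.Adj a u → u = b) :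
    _root_.indepNum (G.induce ({a, b}ᶜ : Set V)) + 1 ≤ _root_.indepNum G := by
  obtain ⟨T, hT, hTc⟩ := exists_isIndepSet_card_eq_indepNum (G := G.induce ({a, b}ᶜ : Set V))
  have haT : a ∉ T.map (Function.Embedding.subtype _) := by
    simp
  have hindep : _root_.IsIndepSet G ↑(insert a (T.map (Function.Embedding.subtype _))) := by
    rw [Finset.coe_insert, Finset.coe_map]
    refine hT.image_val.insert fun x hx hax => ?_
    obtain ⟨y, -, rfl⟩ := hx
    exact y.2 (.inr (hleaf y hax))
  simpa [Finset.card_insert_of_notMem haT, hTc] using card_le_indepNum hindep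

end IndependentSets

section Matchings

variable {G : SimpleGraph V}

theorem matchNum_eq_ncard_edgeSet [Fintype V] {M : G.Subgraph} (hM : M.IsPerfectMatching) :
    matchNum G = M.edgeSet.ncard := by
  refine IsGreatest.csSup_eq ⟨⟨M, hM.1, rfl⟩, ?_⟩
  rintro _ ⟨N, hN, rfl⟩
  have := Set.ncard_le_ncard (Set.subset_univ N.verts)
  rw [hN.ncard_verts, ← Subgraph.isSpanning_iff.mp hM.2, hM.1.ncard_verts] at this
  omega

theorem two_mul_matchNum [Fintype V] {M : G.Subgraph} (hM : M.IsPerfectMatching) :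
    2 * matchNum G = Fintype.card V := by
  rw [matchNum_eq_ncard_edgeSet hM, hM.two_mul_ncard_edgeSet]

theorem eq_comap_induce_of_isPerfectMatching {M : G.Subgraph}
    (huniq : ∀ M' : G.Subgraph, M'.IsPerfectMatching → M' = M) {a b : V} (hab : G.Adj a b)
    {N : (G.induce ({a, b}ᶜ : Set V)).Subgraph} (hN : N.IsPerfectMatching) :
    N = M.comap (Embedding.induce _).toHom := by
  have hsup := hN.map_induce_sup_subgraphOfAdj hab
  rw [← huniq _ hsup]
  ext x y
  · exact iff_of_true (hN.2 x) (hsup.2 _)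
  · simp only [Subgraph.comap_adj, Subgraph.sup_adj, Subgraph.map_adj, subgraphOfAdj_adj]
    refine ⟨fun h => ⟨N.adj_sub h, .inl ⟨x, y, h, rfl, rfl⟩⟩, ?_⟩
    rintro ⟨-, ⟨x', y', h, hx, hy⟩ | hxy⟩
    · rwa [← Subtype.ext hx, ← Subtype.ext hy]
    · obtain hax | hay := Sym2.mem_iff.mp (hxy ▸ Sym2.mem_mk_left a b)
      exacts [(x.2 (.inl hax.symm)).elim, (y.2 (.inl hay.symm)).elim]

end Matchings

theorem KonigEgervary.induce_compl_pair [Fintype V] {G : SimpleGraph V} (hKE : KonigEgervary G)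
    {a b : V} (hleaf : ∀ u, G.Adj a u ↔ u = b) {M : G.Subgraph} (hM : M.IsPerfectMatching)
    {N : (G.induce ({a, b}ᶜ : Set V)).Subgraph} (hN : N.IsPerfectMatching) :
    KonigEgervary (G.induce ({a, b}ᶜ : Set V)) := by
  have hab : G.Adj a b := (hleaf b).2 rfl
  have hcard : Fintype.card ({a, b}ᶜ : Set V) + 2 = Fintype.card V := by
    rw [← Set.ncard_pair hab.ne, ← Nat.card_eq_fintype_card, Nat.card_coe_set_eq, add_comm,
      Set.ncard_add_ncard_compl, Nat.card_eq_fintype_card]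
  have hμ := two_mul_matchNum hM
  have hμ' := two_mul_matchNum hN
  have hα := indepNum_le_indepNum_induce_compl_pair_add_one hab
  have hα' := indepNum_induce_compl_pair_add_one_le fun u => (hleaf u).1
  unfold KonigEgervary at hKE ⊢
  omega

theorem stmt7 (G : SimpleGraph V) [Fintype V] (hKE : KonigEgervary G)
    (M : G.Subgraph) (hM : M.IsPerfectMatching)
    (huniq : ∀ M' : G.Subgraph, M'.IsPerfectMatching → M' = M)
    (a b : V) (hleaf : ∀ u, G.Adj a u ↔ u = b) :
    M.Adj a b ∧
    KonigEgervary (G.induce ({a, b}ᶜ : Set V)) ∧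
    ∃ M' : (G.induce ({a, b}ᶜ : Set V)).Subgraph, M'.IsPerfectMatching ∧
      (∀ x y : ({a, b}ᶜ : Set V), M'.Adj x y ↔ M.Adj ↑x ↑y) ∧
      ∀ M'' : (G.induce ({a, b}ᶜ : Set V)).Subgraph, M''.IsPerfectMatching → M'' = M' := by
  have hab : G.Adj a b := (hleaf b).2 rfl
  have hMab : M.Adj a b := hM.adj_of_forall_adj_eq fun u => (hleaf u).1
  have hM' := hM.comap_induce fun _ _ hxy hx => hM.1.mem_compl_pair_of_adj hMab hxy hx
  refine ⟨hMab, hKE.induce_compl_pair hleaf hM hM', _, hM', fun x y => ?_,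
    fun N hN => eq_comap_induce_of_isPerfectMatching huniq hab hN⟩
  exact and_iff_right_of_imp M.adj_sub
end

section
/- Let G be a graph, let a be a leaf of G with neighbor b, and suppose G - {a, b} is a König-Egerváry graph with a unique perfect matching M. Then G is a König-Egerváry graph with unique perfect matching M ∪ {ab}. -/
open SimpleGraph

attribute [local instance] Classical.propDecidable

variable {V : Type*}

/-! Every perfect matching of `G` must match the leaf `a` with its only neighbour `b`, so it
restricts to a perfect matching of `G - {a, b}`; hence `M ∪ {ab}` is the unique one.
For a graph with a perfect matching `μ = n / 2`, and `α + μ ≤ n` always holds, so being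
König-Egerváry means `n ≤ 2α`. Adding `a` to a maximum independent set of `G - {a, b}`
gives `2 α(G) ≥ 2 α(G - {a, b}) + 2 ≥ (n - 2) + 2`. -/

theorem isIndepSet_iff_simpleGraph_isIndepSet {G : SimpleGraph V} {s : Set V} :
    _root_.IsIndepSet G s ↔ G.IsIndepSet s :=
  ⟨fun h _ hx _ hy _ ↦ h hx hy, fun h _ hx _ hy hxy ↦ h hx hy hxy.ne hxy⟩

theorem indepNum_eq_simpleGraph_indepNum (G : SimpleGraph V) [Fintype V] :
    _root_.indepNum G = G.indepNum := by
  simp only [_root_.indepNum, SimpleGraph.indepNum, isIndepSet_iff_simpleGraph_isIndepSet,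
    isNIndepSet_iff]

namespace SimpleGraph

variable {G : SimpleGraph V}

theorem Subgraph.IsMatching.eq_of_mem_edgeSet_s8 {M : G.Subgraph} (hM : M.IsMatching)
    {v : V} {e₁ e₂ : Sym2 V} (he₁ : e₁ ∈ M.edgeSet) (he₂ : e₂ ∈ M.edgeSet)
    (hv₁ : v ∈ e₁) (hv₂ : v ∈ e₂) : e₁ = e₂ := by
  obtain ⟨w₁, rfl⟩ := Sym2.mem_iff_exists.mp hv₁
  obtain ⟨w₂, rfl⟩ := Sym2.mem_iff_exists.mp hv₂
  rw [Subgraph.mem_edgeSet] at he₁ he₂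
  rw [hM.eq_of_adj_left he₁ he₂]

theorem Subgraph.IsMatching.ncard_verts_s8 [Finite V] {M : G.Subgraph} (hM : M.IsMatching) :
    M.verts.ncard = 2 * M.edgeSet.ncard := by
  have := Fintype.ofFinite V
  rw [← M.image_coe_edgeSet_coe, Set.ncard_image_of_injective _
    (Sym2.map.injective Subtype.val_injective), ← coe_edgeFinset, Set.ncard_coe_finset,
    ← M.coe.sum_degrees_eq_twice_card_edges]
  have hdeg (v : M.verts) [Fintype (M.coe.neighborSet v)] : M.coe.degree v = 1 := by
    rw [coe_degree]
    exact Subgraph.degree_eq_one_iff_existsUnique_adj.2 (hM v.2)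
  simp [hdeg, Set.ncard_eq_toFinset_card']

theorem IsIndepSet.card_add_ncard_edgeSet_le [Fintype V] {s : Finset V}
    (hs : G.IsIndepSet (s : Set V)) {M : G.Subgraph} (hM : M.IsMatching) :
    s.card + M.edgeSet.ncard ≤ Fintype.card V := by
  have hout : ∀ e ∈ M.edgeSet, ∃ v ∈ (s : Set V)ᶜ, v ∈ e := fun e he ↦
    IsIndepSet.nonempty_mem_compl_mem_edge G hs (M.edgeSet_subset he)
  choose f hfs hfe using hout
  have hle : M.edgeSet.ncard ≤ (s : Set V)ᶜ.ncard := by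
    rw [← Nat.card_coe_set_eq, ← Nat.card_coe_set_eq]
    refine Nat.card_le_card_of_injective (fun e ↦ ⟨f e e.2, hfs e e.2⟩) fun e₁ e₂ h ↦ ?_
    have hf : f e₁ e₁.2 = f e₂ e₂.2 := congrArg Subtype.val h
    exact Subtype.ext (hM.eq_of_mem_edgeSet_s8 e₁.2 e₂.2 (hfe _ _) (by rw [hf]; exact hfe _ _))
  rw [Set.ncard_compl, Set.ncard_coe_finset, Nat.card_eq_fintype_card] at hle
  have := s.card_le_univ
  omega

section Fintype

variable [Fintype V]

theorem bddAbove_matchingSizes (G : SimpleGraph V) :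
    BddAbove {n | ∃ M : G.Subgraph, M.IsMatching ∧ M.edgeSet.ncard = n} := by
  refine ⟨Fintype.card V, ?_⟩
  rintro _ ⟨M, hM, rfl⟩
  simpa using IsIndepSet.card_add_ncard_edgeSet_le (s := ∅) (by simp) hM

theorem Subgraph.IsMatching.ncard_edgeSet_le_matchNum {M : G.Subgraph} (hM : M.IsMatching) :
    M.edgeSet.ncard ≤ matchNum G :=
  le_csSup (bddAbove_matchingSizes G) ⟨M, hM, rfl⟩

theorem exists_isMatching_ncard_edgeSet_eq_matchNum (G : SimpleGraph V) :
    ∃ M : G.Subgraph, M.IsMatching ∧ M.edgeSet.ncard = matchNum G :=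
  Nat.sSup_mem (by exact ⟨0, ⊥, by simp [Subgraph.IsMatching]⟩) (bddAbove_matchingSizes G)

theorem indepNum_add_matchNum_le (G : SimpleGraph V) :
    G.indepNum + matchNum G ≤ Fintype.card V := by
  obtain ⟨s, hs⟩ := G.exists_isNIndepSet_indepNum
  obtain ⟨M, hM, hcard⟩ := G.exists_isMatching_ncard_edgeSet_eq_matchNum
  rw [← hs.card_eq, ← hcard]
  exact hs.isIndepSet.card_add_ncard_edgeSet_le hM

theorem Subgraph.IsPerfectMatching.two_mul_matchNum {M : G.Subgraph}
    (hM : M.IsPerfectMatching) : 2 * matchNum G = Fintype.card V := by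
  obtain ⟨M₀, hM₀, hcard⟩ := G.exists_isMatching_ncard_edgeSet_eq_matchNum
  have hM₀verts : M₀.verts.ncard ≤ Fintype.card V := by
    simpa using Set.ncard_le_ncard (Set.subset_univ M₀.verts)
  have hMverts : M.verts.ncard = Fintype.card V := by
    simp [hM.2.verts_eq_univ]
  have := hM.1.ncard_edgeSet_le_matchNum
  rw [hM₀.ncard_verts_s8] at hM₀verts
  rw [hM.1.ncard_verts_s8] at hMverts
  omega

theorem konigEgervary_iff_card_le_two_mul_indepNum {M : G.Subgraph}
    (hM : M.IsPerfectMatching) : KonigEgervary G ↔ Fintype.card V ≤ 2 * G.indepNum := by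
  have := hM.two_mul_matchNum
  have := G.indepNum_add_matchNum_le
  rw [KonigEgervary, indepNum_eq_simpleGraph_indepNum]
  omega

theorem indepNum_induce_add_one_le {s : Set V} {a : V} (ha : a ∉ s)
    (hadj : ∀ v ∈ s, ¬G.Adj a v) : (G.induce s).indepNum + 1 ≤ G.indepNum := by
  obtain ⟨t, ht⟩ := (G.induce s).exists_isNIndepSet_indepNum
  have hat : a ∉ t.map (Function.Embedding.subtype _) := by simp [ha]
  have hindep : G.IsIndepSet (insert a (t.map (Function.Embedding.subtype _)) : Finset V) := by
    rw [Finset.coe_insert, Finset.coe_map, Function.Embedding.coe_subtype, IsIndepSet,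
      Set.pairwise_insert, Subtype.val_injective.injOn.pairwise_image]
    refine ⟨ht.isIndepSet, ?_⟩
    rintro _ ⟨v, -, rfl⟩ -
    exact ⟨hadj v v.2, fun h ↦ hadj v v.2 h.symm⟩
  simpa [Finset.card_insert_of_notMem hat, ht.card_eq] using hindep.card_le_indepNum

end Fintype

theorem Subgraph.IsPerfectMatching.eq_of_le {N N' : G.Subgraph} (hN : N.IsPerfectMatching)
    (hN' : N'.IsMatching) (h : N ≤ N') : N = N' := by
  refine le_antisymm h ⟨fun v _ ↦ hN.2 v, fun v w hvw ↦ ?_⟩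
  obtain ⟨u, hvu, -⟩ := hN.1 (hN.2 v)
  rwa [hN'.eq_of_adj_left hvw (h.2 hvu)]

theorem Subgraph.IsPerfectMatching.comap_induce_s8 {N : G.Subgraph} (hN : N.IsPerfectMatching)
    {s : Set V} (hs : ∀ v ∈ s, ∀ w, N.Adj v w → w ∈ s) :
    (N.comap (Embedding.induce s).toHom).IsPerfectMatching := by
  rw [isPerfectMatching_iff] at hN ⊢
  intro v
  obtain ⟨w, hvw, huniq⟩ := hN v
  exact ⟨⟨w, hs v v.2 w hvw⟩, ⟨N.adj_sub hvw, hvw⟩, fun u hvu ↦ Subtype.ext (huniq u hvu.2)⟩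

variable {a b : V}

theorem Subgraph.IsMatching.mem_compl_pair_of_adj_s8 {N : G.Subgraph} (hN : N.IsMatching)
    (hab : N.Adj a b) {v w : V} (hv : v ∈ ({a, b}ᶜ : Set V)) (hvw : N.Adj v w) :
    w ∈ ({a, b}ᶜ : Set V) := by
  rintro (rfl | rfl)
  · exact hv (.inr (hN.eq_of_adj_left hab hvw.symm).symm)
  · exact hv (.inl (hN.eq_of_adj_left hab.symm hvw.symm).symm)

/-- The matching `M ∪ {ab}` of `G`, for a subgraph `M` of `G - {a, b}`. -/
def Subgraph.insertEdge (M : (G.induce ({a, b}ᶜ : Set V)).Subgraph) (hab : G.Adj a b) :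
    G.Subgraph :=
  M.map (Embedding.induce _).toHom ⊔ G.subgraphOfAdj hab

variable {M : (G.induce ({a, b}ᶜ : Set V)).Subgraph} (hab : G.Adj a b)

theorem Subgraph.insertEdge_adj : (M.insertEdge hab).Adj a b := by
  simp [Subgraph.insertEdge]

theorem Subgraph.insertEdge_adj_coe {x y : ({a, b}ᶜ : Set V)} :
    (M.insertEdge hab).Adj x y ↔ M.Adj x y := by
  have hx := x.2
  simp only [Set.mem_compl_iff, Set.mem_insert_iff, Set.mem_singleton_iff, not_or] at hx
  have hf := (Embedding.induce (G := G) ({a, b}ᶜ : Set V)).injective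
  simp only [Subgraph.insertEdge, sup_adj, map_adj, subgraphOfAdj_adj, Sym2.eq_iff,
    RelHom.coeFn_mk, Function.Embedding.toFun_eq_coe, RelEmbedding.coe_toEmbedding,
    Ne.symm hx.1, Ne.symm hx.2, false_and, and_false, or_self, or_false]
  exact Relation.map_apply_apply hf hf M.Adj x y

theorem Subgraph.insertEdge_le_iff {N : G.Subgraph} :
    M.insertEdge hab ≤ N ↔ M ≤ N.comap (Embedding.induce _).toHom ∧ N.Adj a b := by
  rw [Subgraph.insertEdge, sup_le_iff, map_le_iff_le_comap]
  exact and_congr_right fun _ ↦ ⟨fun h ↦ h.2 (by simp), subgraphOfAdj_le_of_adj N⟩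

theorem Subgraph.IsPerfectMatching.insertEdge (hM : M.IsPerfectMatching) :
    (M.insertEdge hab).IsPerfectMatching := by
  let f := Embedding.induce (G := G) ({a, b}ᶜ : Set V)
  have hMmap := hM.1.map f.toHom f.injective
  have hedge := IsMatching.subgraphOfAdj hab
  refine ⟨hMmap.sup hedge ?_, fun v ↦ ?_⟩
  · rw [hMmap.support_eq_verts, hedge.support_eq_verts]
    simp only [Set.disjoint_left]
    rintro _ ⟨x, -, rfl⟩
    exact x.2
  · by_cases hv : v ∈ ({a, b} : Set V)
    · exact .inr hv
    · exact .inl ⟨⟨v, hv⟩, hM.2 _, rfl⟩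

end SimpleGraph

theorem stmt8 (G : SimpleGraph V) [Fintype V] (a b : V)
    (hleaf : ∀ u, G.Adj a u ↔ u = b)
    (hKE : KonigEgervary (G.induce ({a, b}ᶜ : Set V)))
    (M : (G.induce ({a, b}ᶜ : Set V)).Subgraph) (hM : M.IsPerfectMatching)
    (huniq : ∀ M' : (G.induce ({a, b}ᶜ : Set V)).Subgraph, M'.IsPerfectMatching → M' = M) :
    KonigEgervary G ∧
    ∃ N : G.Subgraph, N.IsPerfectMatching ∧ N.Adj a b ∧
      (∀ x y : ({a, b}ᶜ : Set V), N.Adj ↑x ↑y ↔ M.Adj x y) ∧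
      ∀ N' : G.Subgraph, N'.IsPerfectMatching → N' = N := by
  have hab : G.Adj a b := (hleaf b).2 rfl
  have hN := hM.insertEdge hab
  refine ⟨?_, M.insertEdge hab, hN, Subgraph.insertEdge_adj hab,
    fun x y ↦ Subgraph.insertEdge_adj_coe hab, fun N' hN' ↦ ?_⟩
  · have hH := (konigEgervary_iff_card_le_two_mul_indepNum hM).1 hKE
    have hα : (G.induce ({a, b}ᶜ : Set V)).indepNum + 1 ≤ G.indepNum :=
      indepNum_induce_add_one_le (by simp) fun v hv h ↦ hv (.inr ((hleaf v).1 h))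
    have hcard : Fintype.card ({a, b}ᶜ : Set V) + 2 = Fintype.card V := by
      rw [← Nat.card_eq_fintype_card, Nat.card_coe_set_eq, ← Set.ncard_pair hab.ne, add_comm,
        Set.ncard_add_ncard_compl, Nat.card_eq_fintype_card]
    rw [konigEgervary_iff_card_le_two_mul_indepNum hN]
    omega
  · obtain ⟨w, haw, -⟩ := hN'.1 (hN'.2 a)
    have hN'ab : N'.Adj a b := (hleaf w).1 (N'.adj_sub haw) ▸ haw
    have hcomap := hN'.comap_induce_s8 fun v hv _ ↦ hN'.1.mem_compl_pair_of_adj_s8 hN'ab hv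
    exact (hN.eq_of_le hN'.1 <|
      (Subgraph.insertEdge_le_iff hab).2 ⟨(huniq _ hcomap).ge, hN'ab⟩).symm
end

section
/- A connected bipartite graph G has a perfect matching if and only if core(G) = ∅, where core(G) is the intersection of all maximum independent sets of G. -/
open SimpleGraph

attribute [local instance] Classical.propDecidable

variable {V : Type*}

/-!
Fix a bipartition `(A, Aᶜ)`. A perfect matching injects every independent set into its
complement, so `2 α(G) ≤ |V|`; since both sides are independent, both are maximum, and the core
lies in `A ∩ Aᶜ = ∅`.

Conversely, because every edge crosses the bipartition, `Ω(G)` is closed under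
`S, T ↦ (S ∩ T ∩ A) ∪ ((S ∪ T) \ A)`: this set and its companion with `Aᶜ` in place of `A` are
independent and their sizes add up to `|S| + |T|`. Hence a maximum independent set `S` minimising `|S ∩ A|`
satisfies `S ∩ A ⊆ T` for every `T ∈ Ω(G)`, i.e. `S ∩ A ⊆ core G`. An empty core thus puts `S`
inside `Aᶜ`, so `|A| = |Aᶜ| = α(G)`. Finally, for `W ⊆ A` the set `W ∪ (Aᶜ \ N(W))` is
independent, so `|W| + |Aᶜ| - |N(W)| ≤ α(G) = |Aᶜ|`, which is Hall's condition; symmetrically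
for `W ⊆ Aᶜ`.
-/

open Finset

namespace SimpleGraph

variable {G : SimpleGraph V}

section Independence

variable [Fintype V]

lemma ncard_le_indepNum_of_isIndepSet {s : Set V} (hs : _root_.IsIndepSet G s) :
    s.ncard ≤ _root_.indepNum G := by
  refine le_csSup ⟨Fintype.card V, ?_⟩
    ⟨s.toFinset, by simpa using hs, (Set.ncard_eq_toFinset_card' s).symm⟩
  rintro n ⟨t, -, rfl⟩
  exact t.card_le_univ

lemma card_le_indepNum_of_isIndepSet {s : Finset V} (hs : _root_.IsIndepSet G ↑s) :
    #s ≤ _root_.indepNum G := by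
  simpa using ncard_le_indepNum_of_isIndepSet hs

variable (G) in
lemma exists_isMaxIndepSet : ∃ s : Finset V, IsMaxIndepSet G s :=
  Nat.sSup_mem (s := {n | ∃ s : Finset V, _root_.IsIndepSet G ↑s ∧ #s = n})
    ⟨0, ∅, by simp [_root_.IsIndepSet], rfl⟩
    ⟨Fintype.card V, by rintro n ⟨t, -, rfl⟩; exact t.card_le_univ⟩

lemma core_eq_empty_of_isMaxIndepSet_compl {A : Finset V} (hA : IsMaxIndepSet G A)
    (hAc : IsMaxIndepSet G Aᶜ) : core G = ∅ :=
  Set.eq_empty_of_forall_notMem fun _ hv => mem_compl.mp (hv _ hAc) (hv _ hA)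

end Independence

section Bipartite

variable {s t : Set V}

lemma IsBipartiteWith.isIndepSet_left (h : G.IsBipartiteWith s t) : _root_.IsIndepSet G s :=
  fun _ ha _ hb hab => h.disjoint.notMem_of_mem_left hb (h.mem_of_mem_adj ha hab)

lemma IsBipartiteWith.biUnion_neighborSet_subset (h : G.IsBipartiteWith s t) {W : Set V}
    (hW : W ⊆ s) : ⋃ x ∈ W, G.neighborSet x ⊆ t :=
  Set.iUnion₂_subset fun _ hx => isBipartiteWith_neighborSet_subset h (hW hx)

lemma IsBipartiteWith.compl_finset {A : Finset V} [Fintype V]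
    (hA : G.IsBipartiteWith ↑A (↑A)ᶜ) : G.IsBipartiteWith ↑Aᶜ (↑Aᶜ)ᶜ := by
  simpa only [Finset.coe_compl, compl_compl] using hA.symm

lemma Colorable.exists_isBipartiteWith_compl [Fintype V] (h : G.Colorable 2) :
    ∃ A : Finset V, G.IsBipartiteWith ↑A (↑A)ᶜ := by
  obtain ⟨c⟩ := h
  refine ⟨univ.filter (c · = 0), disjoint_compl_right, fun v w hvw => ?_⟩
  have := c.valid hvw
  simp only [coe_filter, mem_univ, true_and, Set.mem_ofPred_eq, Set.mem_compl_iff]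
  omega

lemma IsBipartiteWith.ncard_le_ncard_biUnion_neighborSet [Fintype V]
    (h : G.IsBipartiteWith s t) (ht : t.ncard = _root_.indepNum G) {W : Set V} (hW : W ⊆ s) :
    W.ncard ≤ (⋃ x ∈ W, G.neighborSet x).ncard := by
  set N := ⋃ x ∈ W, G.neighborSet x
  have hNt : N ⊆ t := h.biUnion_neighborSet_subset hW
  have hindep : _root_.IsIndepSet G (W ∪ (t \ N)) := by
    rintro a (ha | ⟨hat, haN⟩) b (hb | ⟨hbt, hbN⟩) hab
    · exact h.isIndepSet_left (hW ha) (hW hb) hab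
    · exact hbN (Set.mem_biUnion ha hab)
    · exact haN (Set.mem_biUnion hb hab.symm)
    · exact h.symm.isIndepSet_left hat hbt hab
  have hcard := ncard_le_indepNum_of_isIndepSet hindep
  rw [Set.ncard_union_eq (h.disjoint.mono hW Set.sdiff_subset), Set.ncard_sdiff hNt] at hcard
  have := Set.ncard_le_ncard hNt
  omega

lemma IsBipartiteWith.exists_isPerfectMatching [Fintype V] (h : G.IsBipartiteWith s sᶜ)
    (hs : s.ncard = _root_.indepNum G) (hsc : sᶜ.ncard = _root_.indepNum G) :
    ∃ M : G.Subgraph, M.IsPerfectMatching := by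
  refine exists_isPerfectMatching_of_forall_ncard_le h fun S => ?_
  have hin := h.biUnion_neighborSet_subset (W := S ∩ s) Set.inter_subset_right
  have hout := h.symm.biUnion_neighborSet_subset (W := S \ s) fun _ hx => hx.2
  calc S.ncard = (S ∩ s).ncard + (S \ s).ncard :=
        (Set.ncard_inter_add_ncard_sdiff_eq_ncard S s).symm
    _ ≤ (⋃ x ∈ S ∩ s, G.neighborSet x).ncard + (⋃ x ∈ S \ s, G.neighborSet x).ncard :=
      add_le_add (h.ncard_le_ncard_biUnion_neighborSet hsc Set.inter_subset_right)
        (h.symm.ncard_le_ncard_biUnion_neighborSet hs fun _ hx => hx.2)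
    _ = ((⋃ x ∈ S ∩ s, G.neighborSet x) ∪ ⋃ x ∈ S \ s, G.neighborSet x).ncard :=
      (Set.ncard_union_eq (disjoint_compl_left.mono hin hout)).symm
    _ ≤ (⋃ x ∈ S, G.neighborSet x).ncard :=
      Set.ncard_le_ncard <| Set.union_subset
        (Set.biUnion_mono Set.inter_subset_left fun _ _ => le_rfl)
        (Set.biUnion_mono Set.sdiff_subset fun _ _ => le_rfl)

variable {A X Y : Finset V}

/-- An edge has its `A`-end in `X ∩ Y`, so it lies inside `X` or inside `Y`. -/
lemma IsBipartiteWith.isIndepSet_inter_union_sdiff (hA : G.IsBipartiteWith ↑A (↑A)ᶜ)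
    (hX : _root_.IsIndepSet G ↑X) (hY : _root_.IsIndepSet G ↑Y) :
    _root_.IsIndepSet G ↑(X ∩ Y ∩ A ∪ (X ∪ Y) \ A) := by
  intro a ha b hb hab
  rcases hA.mem_of_adj hab with ⟨haA, hbA⟩ | ⟨haA, hbA⟩ <;> grind [_root_.IsIndepSet]

variable [Fintype V]

lemma IsBipartiteWith.isMaxIndepSet_inter_union_sdiff (hA : G.IsBipartiteWith ↑A (↑A)ᶜ)
    (hX : IsMaxIndepSet G X) (hY : IsMaxIndepSet G Y) :
    IsMaxIndepSet G (X ∩ Y ∩ A ∪ (X ∪ Y) \ A) := by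
  have hm := card_le_indepNum_of_isIndepSet (hA.isIndepSet_inter_union_sdiff hX.1 hY.1)
  have hj :=
    card_le_indepNum_of_isIndepSet (hA.compl_finset.isIndepSet_inter_union_sdiff hX.1 hY.1)
  set m := X ∩ Y ∩ A ∪ (X ∪ Y) \ A
  set j := X ∩ Y ∩ Aᶜ ∪ (X ∪ Y) \ Aᶜ
  have hunion : m ∪ j = X ∪ Y := by
    ext; simp only [m, j, mem_union, mem_inter, mem_sdiff, mem_compl]; tauto
  have hinter : m ∩ j = X ∩ Y := by
    ext; simp only [m, j, mem_union, mem_inter, mem_sdiff, mem_compl]; tauto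
  have := card_union_add_card_inter m j
  rw [hunion, hinter, card_union_add_card_inter, hX.2, hY.2] at this
  exact ⟨hA.isIndepSet_inter_union_sdiff hX.1 hY.1, by omega⟩

lemma IsBipartiteWith.exists_isMaxIndepSet_inter_subset_core
    (hA : G.IsBipartiteWith ↑A (↑A)ᶜ) : ∃ S, IsMaxIndepSet G S ∧ ↑(S ∩ A) ⊆ core G := by
  obtain ⟨S₀, hS₀⟩ := exists_isMaxIndepSet G
  obtain ⟨S, hS, hmin⟩ := Finset.exists_min_image {S | IsMaxIndepSet G S} (fun S => #(S ∩ A))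
    ⟨S₀, by simpa using hS₀⟩
  simp only [mem_filter, mem_univ, true_and] at hS hmin
  refine ⟨S, hS, fun v hv T hT => ?_⟩
  have hle := hmin _ (hA.isMaxIndepSet_inter_union_sdiff hS hT)
  rw [show (S ∩ T ∩ A ∪ (S ∪ T) \ A) ∩ A = S ∩ T ∩ A by grind] at hle
  have hST : S ∩ T ∩ A = S ∩ A :=
    eq_of_subset_of_card_le (inter_subset_inter_right inter_subset_left) hle
  exact (mem_inter.mp (mem_inter.mp (hST ▸ hv : v ∈ S ∩ T ∩ A)).1).2

lemma IsBipartiteWith.card_compl_eq_indepNum_of_core_eq_empty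
    (hA : G.IsBipartiteWith ↑A (↑A)ᶜ) (hcore : core G = ∅) : #Aᶜ = _root_.indepNum G := by
  obtain ⟨S, hS, hcoreS⟩ := hA.exists_isMaxIndepSet_inter_subset_core
  have hSA : S ⊆ Aᶜ := fun x hx => mem_compl.mpr fun hxA =>
    (hcore ▸ hcoreS) (mem_coe.mpr (mem_inter.mpr ⟨hx, hxA⟩))
  have hindep := card_le_indepNum_of_isIndepSet hA.compl_finset.isIndepSet_left
  have := card_le_card hSA
  rw [hS.2] at this
  omega

end Bipartite

section PerfectMatching

lemma Subgraph.IsPerfectMatching.ncard_le_ncard_compl {M : G.Subgraph}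
    [Finite V] (hM : M.IsPerfectMatching) {s : Set V} (hs : _root_.IsIndepSet G s) :
    s.ncard ≤ sᶜ.ncard := by
  choose p hp using fun v => (Subgraph.isPerfectMatching_iff.mp hM v).exists
  refine Set.ncard_le_ncard_of_injOn p (fun v hv hpv => hs hv hpv (M.adj_sub (hp v))) ?_
  intro u _ v _ huv
  exact hM.1.eq_of_adj_right (hp u) (huv ▸ hp v)

variable [Fintype V]

lemma Subgraph.IsPerfectMatching.two_mul_indepNum_le_card {M : G.Subgraph}
    (hM : M.IsPerfectMatching) : 2 * _root_.indepNum G ≤ Fintype.card V := by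
  obtain ⟨S, hS_indep, hS_card⟩ := exists_isMaxIndepSet G
  have := hM.ncard_le_ncard_compl hS_indep
  rw [← Finset.coe_compl, Set.ncard_coe_finset, Set.ncard_coe_finset, card_compl] at this
  omega

lemma IsBipartiteWith.isMaxIndepSet_of_two_mul_indepNum_le {A : Finset V}
    (hA : G.IsBipartiteWith ↑A (↑A)ᶜ) (h : 2 * _root_.indepNum G ≤ Fintype.card V) :
    IsMaxIndepSet G A := by
  have hA_le := card_le_indepNum_of_isIndepSet hA.isIndepSet_left
  have hAc_le := card_le_indepNum_of_isIndepSet hA.compl_finset.isIndepSet_left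
  rw [card_compl] at hAc_le
  exact ⟨hA.isIndepSet_left, by have := A.card_le_univ; omega⟩

end PerfectMatching

end SimpleGraph

theorem stmt9_general (G : SimpleGraph V) [Fintype V] (hbip : G.Colorable 2) :
    (∃ M : G.Subgraph, M.IsPerfectMatching) ↔ core G = ∅ := by
  obtain ⟨A, hA⟩ := hbip.exists_isBipartiteWith_compl
  constructor
  · rintro ⟨M, hM⟩
    exact core_eq_empty_of_isMaxIndepSet_compl
      (hA.isMaxIndepSet_of_two_mul_indepNum_le hM.two_mul_indepNum_le_card)
      (hA.compl_finset.isMaxIndepSet_of_two_mul_indepNum_le hM.two_mul_indepNum_le_card)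
  · intro hcore
    have hAc := hA.card_compl_eq_indepNum_of_core_eq_empty hcore
    have hAcc := hA.compl_finset.card_compl_eq_indepNum_of_core_eq_empty hcore
    rw [compl_compl] at hAcc
    exact hA.exists_isPerfectMatching (by rwa [Set.ncard_coe_finset])
      (by rwa [← coe_compl, Set.ncard_coe_finset])

theorem stmt9 (G : SimpleGraph V) [Fintype V] (hconn : G.Connected) (hbip : G.Colorable 2) :
    (∃ M : G.Subgraph, M.IsPerfectMatching) ↔ core G = ∅ :=
  stmt9_general G hbip
end

section
/- If a unicyclic graph G with an odd cycle has a perfect matching M, then M is the unique perfect matching of G. -/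
/-!
If `M' ≠ M` are perfect matchings, the symmetric difference of their edge sets is a nonempty
graph in which every vertex has degree 0 or 2, so it contains a cycle of `G`. Its edges
alternate between `M` and `M'`, so this cycle is even; but `G` is unicyclic, so it has the
same edges as the given odd cycle.
-/

open SimpleGraph

attribute [local instance] Classical.propDecidable

variable {V : Type*}

open scoped symmDiff

namespace SimpleGraph.Walk

variable {G H : SimpleGraph V} {u : V}

lemma IsCycle.even_length_of_isAlternating {p : G.Walk u u} (hp : p.IsCycle)
    (halt : G.IsAlternating H) : Even p.length := by
  have hlen := hp.three_le_length
  have hflip : ∀ i, i + 1 < p.length → (H.Adj (p.getVert (i + 1)) (p.getVert (i + 2)) ↔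
      ¬ H.Adj (p.getVert i) (p.getVert (i + 1))) := by
    intro i hi
    have hne := hp.getVert_sub_one_ne_getVert_add_one (i := i + 1) (by omega)
    rw [H.adj_comm (p.getVert i)]
    exact halt hne.symm (p.adj_getVert_succ hi) (p.adj_getVert_succ (i := i) (by omega)).symm
  have hparity : ∀ i, i < p.length →
      (H.Adj (p.getVert i) (p.getVert (i + 1)) ↔ (Even i ↔ H.Adj u p.snd)) := by
    intro i hi
    induction i with
    | zero => simp
    | succ i ih => rw [hflip i hi, ih (by omega), Nat.even_add_one]; tauto
  have hwrap : H.Adj u p.snd ↔ ¬ H.Adj p.penultimate u := by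
    rw [H.adj_comm _ u]
    exact halt hp.snd_ne_penultimate (p.adj_snd hp.not_nil) (p.adj_penultimate hp.not_nil).symm
  have hlast := hparity (p.length - 1) (by omega)
  rw [Nat.sub_add_cancel (by omega), p.getVert_length] at hlast
  have hodd : ¬ Even (p.length - 1) := by tauto
  by_contra heven
  exact hodd (Nat.Odd.sub_odd (Nat.not_even_iff_odd.mp heven) odd_one)

end SimpleGraph.Walk

lemma SimpleGraph.IsCycles.exists_isCycle [Finite V] {D : SimpleGraph V} (hD : D.IsCycles)
    (hne : D ≠ ⊥) : ∃ (v : V) (p : D.Walk v v), p.IsCycle := by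
  obtain ⟨v, w, hvw⟩ := ne_bot_iff_exists_adj.mp hne
  obtain ⟨p, hp, -⟩ := hD.exists_cycle_toSubgraph_verts_eq_connectedComponentSupp
    (c := D.connectedComponentMk v) rfl ⟨w, hvw⟩
  exact ⟨v, p, hp⟩

lemma SimpleGraph.Subgraph.IsPerfectMatching.eq_of_spanningCoe_eq {G : SimpleGraph V}
    {M M' : G.Subgraph} (hM : M.IsPerfectMatching) (hM' : M'.IsPerfectMatching)
    (h : M.spanningCoe = M'.spanningCoe) : M = M' := by
  ext
  · simp [hM.2 _, hM'.2 _]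
  · rw [Subgraph.spanningCoe_inj.mp h]

lemma UniqueCycle.length_eq {G : SimpleGraph V} (huni : UniqueCycle G) {u v : V}
    {p : G.Walk u u} {q : G.Walk v v} (hp : p.IsCycle) (hq : q.IsCycle) :
    p.length = q.length := by
  have hedges : {e | e ∈ p.edges} = {e | e ∈ q.edges} :=
    huni.unique ⟨u, p, hp, rfl⟩ ⟨v, q, hq, rfl⟩
  rw [← p.length_edges, ← q.length_edges]
  refine ((List.perm_ext_iff_of_nodup hp.edges_nodup hq.edges_nodup).mpr fun e => ?_).length_eq
  exact Set.ext_iff.mp hedges e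

theorem stmt10 (G : SimpleGraph V) [Fintype V] (huni : UniqueCycle G)
    (hodd : ∃ (v : V) (p : G.Walk v v), p.IsCycle ∧ Odd p.length)
    (M : G.Subgraph) (hM : M.IsPerfectMatching) :
    ∀ M' : G.Subgraph, M'.IsPerfectMatching → M' = M := by
  intro M' hM'
  by_contra hne
  set D := M.spanningCoe ∆ M'.spanningCoe
  have hDG : D ≤ G := symmDiff_le_sup.trans (sup_le M.spanningCoe_le M'.spanningCoe_le)
  have hDne : D ≠ ⊥ := fun h =>
    hne (hM'.eq_of_spanningCoe_eq hM (symmDiff_eq_bot.mp h).symm)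
  obtain ⟨v, c, hc⟩ := (hM.symmDiff_isCycles hM').exists_isCycle hDne
  have heven : Even c.length :=
    hc.even_length_of_isAlternating (hM.isAlternating_symmDiff_left hM')
  obtain ⟨u, p, hp, hpodd⟩ := hodd
  have hlen : (c.mapLe hDG).length = p.length := huni.length_eq (hc.mapLe hDG) hp
  rw [Walk.length_mapLe] at hlen
  exact Nat.not_even_iff_odd.mpr hpodd (hlen ▸ heven)
end

section
/- If G is a König-Egerváry graph with a unique perfect matching M and S is a maximum independent set, then |M| = |S| = α(G) = μ(G) and every edge of M joins a vertex of S to a vertex of V(G) - S, with each vertex of V(G) - S matched to exactly one vertex of S. -/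
open SimpleGraph

attribute [local instance] Classical.propDecidable

variable {V : Type*}

/-! Matching every vertex to its partner in the perfect matching `M` is a fixed-point-free
involution `mate`, and it maps an independent set `S` into `V \ S`. Hence `S` and `mate '' S` are
disjoint copies of `S`, so `2|S| ≤ |V| = 2|M|`, while `μ(G) = |M|`. The König–Egerváry identity
`α + μ = |V|` turns this into `2|S| = |V|`, i.e. `S ∪ mate '' S = V`: every vertex outside `S`
is mated into `S`, and every edge of `M` has exactly one end in `S`. -/

namespace SimpleGraph.Subgraph

variable {G : SimpleGraph V} {M : G.Subgraph}

theorem IsMatching.ncard_verts_eq_two_mul_ncard_edgeSet [Finite V] (hM : M.IsMatching) :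
    M.verts.ncard = 2 * M.edgeSet.ncard := by
  have := Fintype.ofFinite V
  have hdeg := M.coe.sum_degrees_eq_twice_card_edges
  rw [isMatching_iff_forall_degree] at hM
  have hcoe : M.edgeSet.ncard = M.coe.edgeFinset.card := by
    rw [← image_coe_edgeSet_coe, Set.ncard_image_of_injective _ (Sym2.map.injective
      Subtype.val_injective), ← Set.ncard_coe_finset, coe_edgeFinset]
  have hdeg_one : ∀ v : M.verts, M.coe.degree v = 1 := fun v => by
    rw [coe_degree]; convert hM v v.2
  rw [Finset.sum_congr rfl fun v _ => by convert hdeg_one v, Finset.sum_const, Finset.card_univ,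
    smul_eq_mul, mul_one] at hdeg
  rw [hcoe, ← hdeg, ← Nat.card_coe_set_eq, Nat.card_eq_fintype_card]

theorem IsPerfectMatching.card_eq_two_mul_ncard_edgeSet [Fintype V] (hM : M.IsPerfectMatching) :
    Fintype.card V = 2 * M.edgeSet.ncard := by
  rw [← hM.1.ncard_verts_eq_two_mul_ncard_edgeSet, hM.2.verts_eq_univ, Set.ncard_univ,
    Nat.card_eq_fintype_card]

theorem IsPerfectMatching.matchNum_eq_ncard_edgeSet [Fintype V] (hM : M.IsPerfectMatching) :
    matchNum G = M.edgeSet.ncard := by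
  have hbound : ∀ n ∈ {n | ∃ M' : G.Subgraph, M'.IsMatching ∧ M'.edgeSet.ncard = n},
      n ≤ M.edgeSet.ncard := by
    rintro _ ⟨M', hM', rfl⟩
    have := Set.ncard_le_ncard (Set.subset_univ M'.verts)
    rw [hM'.ncard_verts_eq_two_mul_ncard_edgeSet, Set.ncard_univ, Nat.card_eq_fintype_card,
      hM.card_eq_two_mul_ncard_edgeSet] at this
    omega
  exact le_antisymm (csSup_le ⟨_, M, hM.1, rfl⟩ hbound) (le_csSup ⟨_, hbound⟩ ⟨M, hM.1, rfl⟩)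

namespace IsPerfectMatching

variable (hM : M.IsPerfectMatching)

noncomputable def mate (v : V) : V :=
  (isPerfectMatching_iff.mp hM v).exists.choose

theorem adj_mate (v : V) : M.Adj v (hM.mate v) :=
  (isPerfectMatching_iff.mp hM v).exists.choose_spec

theorem mate_eq_of_adj {v w : V} (h : M.Adj v w) : hM.mate v = w :=
  hM.1.eq_of_adj_left (hM.adj_mate v) h

theorem mate_mate (v : V) : hM.mate (hM.mate v) = v :=
  hM.mate_eq_of_adj (hM.adj_mate v).symm

theorem mate_injective : Function.Injective hM.mate :=
  Function.LeftInverse.injective hM.mate_mate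

theorem mate_notMem {S : Finset V} (hS : _root_.IsIndepSet G S) {a : V} (ha : a ∈ S) :
    hM.mate a ∉ S :=
  fun h => hS ha h (M.adj_sub (hM.adj_mate a))

theorem card_union_image_mate {S : Finset V} (hS : _root_.IsIndepSet G S) :
    (S ∪ S.image hM.mate).card = 2 * S.card := by
  have hdisj : Disjoint S (S.image hM.mate) := by
    rw [Finset.disjoint_right]
    rintro _ hb ha
    obtain ⟨a, ha', rfl⟩ := Finset.mem_image.mp hb
    exact hM.mate_notMem hS ha' ha
  rw [Finset.card_union_of_disjoint hdisj, Finset.card_image_of_injective _ hM.mate_injective,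
    two_mul]

theorem mate_mem_of_two_mul_card_eq [Fintype V] {S : Finset V} (hS : _root_.IsIndepSet G S)
    (hcard : 2 * S.card = Fintype.card V) {b : V} (hb : b ∉ S) : hM.mate b ∈ S := by
  have huniv : S ∪ S.image hM.mate = Finset.univ :=
    Finset.eq_univ_of_card _ (hM.card_union_image_mate hS ▸ hcard)
  have hb' : b ∈ S ∪ S.image hM.mate := huniv ▸ Finset.mem_univ b
  obtain ⟨a, ha, rfl⟩ := Finset.mem_image.mp ((Finset.mem_union.mp hb').resolve_left hb)
  rwa [hM.mate_mate]

include hM in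
theorem exists_eq_mk_mem_notMem [Fintype V] {S : Finset V} (hS : _root_.IsIndepSet G S)
    (hcard : 2 * S.card = Fintype.card V) {e : Sym2 V} (he : e ∈ M.edgeSet) :
    ∃ a b, e = s(a, b) ∧ a ∈ S ∧ b ∉ S := by
  induction e using Sym2.ind with
  | _ x y =>
    rw [Subgraph.mem_edgeSet] at he
    obtain rfl := hM.mate_eq_of_adj he
    by_cases hx : x ∈ S
    · exact ⟨x, hM.mate x, rfl, hx, hM.mate_notMem hS hx⟩
    · exact ⟨hM.mate x, x, Sym2.eq_swap, hM.mate_mem_of_two_mul_card_eq hS hcard hx, hx⟩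

end IsPerfectMatching

end SimpleGraph.Subgraph

theorem stmt18_general (G : SimpleGraph V) [Fintype V] (hKE : KonigEgervary G)
    (M : G.Subgraph) (hM : M.IsPerfectMatching)
    (S : Finset V) (hS : IsMaxIndepSet G S) :
    M.edgeSet.ncard = S.card ∧ S.card = _root_.indepNum G ∧ _root_.indepNum G = matchNum G ∧
    (∀ e ∈ M.edgeSet, ∃ a b, e = s(a, b) ∧ a ∈ S ∧ b ∉ S) ∧
    (∀ b, b ∉ S → ∃! a, a ∈ S ∧ M.Adj b a) := by
  have hμ := hM.matchNum_eq_ncard_edgeSet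
  have hn := hM.card_eq_two_mul_ncard_edgeSet
  have hα := hS.2
  have hαμ : _root_.indepNum G + matchNum G = Fintype.card V := hKE
  have hcard : 2 * S.card = Fintype.card V := by omega
  refine ⟨by omega, hα, by omega, fun e he => hM.exists_eq_mk_mem_notMem hS.1 hcard he,
    fun b hb => ⟨hM.mate b, ⟨hM.mate_mem_of_two_mul_card_eq hS.1 hcard hb, hM.adj_mate b⟩,
      fun a ha => (hM.mate_eq_of_adj ha.2).symm⟩⟩

theorem stmt18 (G : SimpleGraph V) [Fintype V] (hKE : KonigEgervary G)
    (M : G.Subgraph) (hM : M.IsPerfectMatching)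
    (huniq : ∀ M' : G.Subgraph, M'.IsPerfectMatching → M' = M)
    (S : Finset V) (hS : IsMaxIndepSet G S) :
    M.edgeSet.ncard = S.card ∧ S.card = _root_.indepNum G ∧ _root_.indepNum G = matchNum G ∧
    (∀ e ∈ M.edgeSet, ∃ a b, e = s(a, b) ∧ a ∈ S ∧ b ∉ S) ∧
    (∀ b, b ∉ S → ∃! a, a ∈ S ∧ M.Adj b a) :=
  stmt18_general G hKE M hM S hS
end
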